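/- arXiv:2107.05119 — 7 statements merged into one kernel-verified Lean document; each statement's English description precedes it below -/
import Mathlib

section
/- Let E be a Euclidean vector space of dimension n > 2 and let m ≥ 1. If W : E \ {0} → ℝ is a continuous function, homogeneous of degree m, such that the restriction of W to every hyperplane H ⊂ E is a homogeneous polynomial of degree m, then W is a homogeneous polynomial of degree m on E. -/
open scoped RealInnerProductSpace

noncomputable section

abbrev E (n : ℕ) := EuclideanSpace ℝ (Fin n)

/-- Evaluation of a polynomial in `n` variables at a point of Euclidean space. -/
def evalP {n : ℕ} (P : MvPolynomial (Fin n) ℝ) (v : E n) : ℝ :=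
  MvPolynomial.eval (fun i => v i) P

/-!
Extend `W` by `0` at the origin; since `m ≥ 1` this agrees with every hyperplane polynomial there.
As `n > 2`, every affine line lies in a hyperplane, so the extension is a polynomial of degree
`≤ m` along every line, in particular in each coordinate separately. Lagrange interpolation at
`m + 1` fixed nodes, one coordinate at a time, then writes it as a global polynomial `Q`, and
homogeneity of `W` along rays forces `W` to agree with the degree-`m` component of `Q`.
-/

open Function

namespace MvPolynomial

variable {K σ : Type*}

theorem IsHomogeneous.eval_smul [CommSemiring K] {φ : MvPolynomial σ K} {n : ℕ}
    (hφ : φ.IsHomogeneous n) (t : K) (x : σ → K) :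
    eval (t • x) φ = t ^ n * eval x φ := by
  rw [eval_eq, eval_eq, Finset.mul_sum]
  refine Finset.sum_congr rfl fun d hd => ?_
  have hdeg : ∑ i ∈ d.support, d i = n := by
    simpa [Finsupp.weight_apply, Finsupp.sum] using hφ (mem_support_iff.mp hd)
  simp only [Pi.smul_apply, smul_eq_mul, mul_pow, Finset.prod_mul_distrib,
    Finset.prod_pow_eq_pow_sum, hdeg]
  ring

theorem eval_homogeneousComponent_eq_of_eval_smul [CommRing K] [IsDomain K]
    {φ : MvPolynomial σ K} {n : ℕ} {x : σ → K} {S : Set K} (hS : S.Infinite)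
    (h : ∀ t ∈ S, eval (t • x) φ = t ^ n * eval x φ) :
    eval x (homogeneousComponent n φ) = eval x φ := by
  obtain ⟨N, hN, hφN⟩ : ∃ N, n < N ∧ φ.totalDegree < N :=
    ⟨φ.totalDegree + n + 1, by omega, by omega⟩
  have hsum : φ = ∑ k ∈ Finset.range N, homogeneousComponent k φ := by
    conv_lhs => rw [← sum_homogeneousComponent φ]
    refine Finset.sum_subset (Finset.range_subset_range.mpr hφN) fun k _ hk => ?_
    exact homogeneousComponent_eq_zero k φ (by rw [Finset.mem_range] at hk; omega)
  obtain ⟨p, hp_def⟩ : ∃ p : Polynomial K, p = ∑ k ∈ Finset.range N,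
      Polynomial.C (eval x (homogeneousComponent k φ)) * Polynomial.X ^ k := ⟨_, rfl⟩
  have hp : ∀ t, p.eval t = eval (t • x) φ := by
    intro t
    conv_rhs => rw [hsum]
    simp only [hp_def, Polynomial.eval_finsetSum, Polynomial.eval_mul, Polynomial.eval_C,
      Polynomial.eval_pow, Polynomial.eval_X, map_sum,
      (homogeneousComponent_isHomogeneous _ φ).eval_smul, mul_comm]
  have hpq : p = Polynomial.C (eval x φ) * Polynomial.X ^ n := by
    rw [← sub_eq_zero]
    refine Polynomial.eq_zero_of_infinite_isRoot _ (hS.mono fun t ht => ?_)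
    simp only [Set.mem_ofPred_eq, Polynomial.IsRoot.def, Polynomial.eval_sub, hp, h t ht,
      Polynomial.eval_mul, Polynomial.eval_C, Polynomial.eval_pow, Polynomial.eval_X, mul_comm,
      sub_self]
  simpa [hp_def, Polynomial.finsetSum_coeff, Polynomial.coeff_C_mul, Polynomial.coeff_X_pow, hN]
    using congr_arg (Polynomial.coeff · n) hpq

theorem exists_natDegree_le_eval_add_smul [CommSemiring K] {φ : MvPolynomial σ K} {m : ℕ}
    (hφ : φ.totalDegree ≤ m) (a b : σ → K) :
    ∃ p : Polynomial K, p.natDegree ≤ m ∧ ∀ t, eval (a + t • b) φ = p.eval t := by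
  refine ⟨aeval (fun i => Polynomial.C (a i) + Polynomial.C (b i) * Polynomial.X) φ, ?_,
    fun t => ?_⟩
  · simpa using aeval_natDegree_le (n := 1) φ hφ _ fun i =>
      (Polynomial.natDegree_add_le _ _).trans (by
        simpa using (Polynomial.natDegree_C_mul_le (b i) _).trans Polynomial.natDegree_X_le)
  · have hline : (fun i => Polynomial.aeval t (Polynomial.C (a i) + Polynomial.C (b i) *
        Polynomial.X)) = a + t • b := by
      funext i
      simp only [map_add, map_mul, Polynomial.aeval_C, Polynomial.aeval_X, Algebra.algebraMap_self,
        RingHom.id_apply, Pi.add_apply, Pi.smul_apply, smul_eq_mul, mul_comm]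
    rw [← Polynomial.coe_aeval_eq_eval, comp_aeval_apply, hline]
    rfl

theorem exists_eval_eq_of_forall_eq_sum_update [CommSemiring K] [Fintype σ] [DecidableEq σ]
    (s : Finset K) (c : K → Polynomial K) (f : (σ → K) → K)
    (hf : ∀ x i, f x = ∑ r ∈ s, (c r).eval (x i) * f (update x i r)) :
    ∃ Q : MvPolynomial σ K, ∀ x, f x = eval x Q := by
  let coord : σ → (σ → K) → K := fun i x => x i
  -- `g ∈ A t`: `g` is a polynomial in the coordinates whose coefficients are functions not
  -- depending on the coordinates in `t`.
  let A : Finset σ → Subalgebra K ((σ → K) → K) := fun t =>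
    Algebra.adjoin K (Set.range coord ∪ {g | DependsOn g ↑tᶜ})
  have hA : ∀ t, f ∈ A t := by
    intro t
    induction t using Finset.induction_on with
    | empty => exact Algebra.subset_adjoin (Or.inr (by simpa using dependsOn_univ f))
    | insert i t _ ih =>
      let updateAt (r : K) : ((σ → K) → K) →ₐ[K] ((σ → K) → K) :=
        AlgHom.pi fun x => Pi.evalAlgHom K _ (update x i r)
      have hupdateAt (r : K) (g : (σ → K) → K) : updateAt r g = fun x => g (update x i r) := rfl
      have hmap : ∀ r, (A t).map (updateAt r) ≤ A (insert i t) := by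
        intro r
        rw [AlgHom.map_adjoin, Algebra.adjoin_le_iff, Set.image_subset_iff]
        rintro g (⟨j, rfl⟩ | hg)
        · by_cases hji : j = i
          · subst hji
            exact Algebra.subset_adjoin (Or.inr fun x y _ => by simp [hupdateAt, coord])
          · exact Algebra.subset_adjoin
              (Or.inl ⟨j, _root_.funext fun x => by simp [hupdateAt, coord, hji]⟩)
        · exact Algebra.subset_adjoin
            (Or.inr (by simpa [hupdateAt, Finset.compl_insert] using hg.update i r))
      have hsum : f = ∑ r ∈ s, Polynomial.aeval (coord i) (c r) * updateAt r f := by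
        funext x
        simpa [hupdateAt, coord, Polynomial.aeval_fn_apply] using hf x i
      rw [hsum]
      refine sum_mem fun r _ => mul_mem ?_ (hmap r ⟨f, ih, rfl⟩)
      exact Algebra.adjoin_mono
        (Set.singleton_subset_iff.mpr (Set.mem_union_left _ (Set.mem_range_self i)))
        (Polynomial.aeval_mem_adjoin_singleton K (coord i))
  have hle : A Finset.univ ≤ (aeval coord).range := by
    rw [aeval_range, Algebra.adjoin_le_iff]
    rintro g (hg | hg)
    · exact Algebra.subset_adjoin hg
    · have hconst : g = algebraMap K _ (g 0) :=
        _root_.funext fun x => DependsOn.empty (by simpa using hg) x 0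
      rw [hconst]
      exact Subalgebra.algebraMap_mem _ _
  obtain ⟨Q, hQ⟩ := hle (hA Finset.univ)
  refine ⟨Q, fun x => ?_⟩
  rw [← hQ]
  exact comp_aeval_apply coord (Pi.evalAlgHom K _ x) Q

theorem exists_eval_eq_of_forall_update_eq_eval [Field K] [Infinite K] [Fintype σ]
    [DecidableEq σ] (m : ℕ) (f : (σ → K) → K)
    (hf : ∀ x i, ∃ p : Polynomial K, p.natDegree ≤ m ∧ ∀ t, f (update x i t) = p.eval t) :
    ∃ Q : MvPolynomial σ K, ∀ x, f x = eval x Q := by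
  classical
  obtain ⟨s, hs⟩ := Infinite.exists_subset_card_eq K (m + 1)
  refine exists_eval_eq_of_forall_eq_sum_update s (Lagrange.basis s id) f fun x i => ?_
  obtain ⟨p, hpm, hp⟩ := hf x i
  have hdeg : p.degree < s.card := by
    rw [hs]
    exact (Polynomial.degree_le_of_natDegree_le hpm).trans_lt (by exact_mod_cast m.lt_succ_self)
  calc f x = p.eval (x i) := by rw [← hp, update_eq_self]
    _ = (Lagrange.interpolate s id fun r => p.eval r).eval (x i) :=
      congrArg _ (Lagrange.eq_interpolate (Set.injOn_id _) hdeg)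
    _ = _ := by
      simp [Lagrange.interpolate_apply, Polynomial.eval_finsetSum, hp, mul_comm]

end MvPolynomial

theorem Submodule.exists_finrank_add_one_eq_of_mem_of_mem {K V : Type*} [Field K]
    [AddCommGroup V] [Module K V] [FiniteDimensional K V] (hV : 2 < Module.finrank K V) (a b : V) :
    ∃ H : Submodule K V, Module.finrank K H + 1 = Module.finrank K V ∧ a ∈ H ∧ b ∈ H := by
  classical
  have hspan : Module.finrank K (span K (({a, b} : Finset V) : Set V)) < Module.finrank K V :=
    (finrank_span_finset_le_card (R := K) ({a, b} : Finset V)).trans_lt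
      (Finset.card_le_two.trans_lt hV)
  obtain ⟨f, hf, hle⟩ := exists_le_ker_of_lt_top _ (lt_top_of_finrank_lt_finrank hspan)
  exact ⟨LinearMap.ker f, Module.Dual.finrank_ker_add_one_of_ne_zero hf,
    hle (subset_span (by simp)), hle (subset_span (by simp))⟩

theorem exists_natDegree_le_update_zero_add_smul {n m : ℕ} (hn : 2 < n) (hm : 1 ≤ m)
    (W : E n → ℝ) (hres : ∀ H : Submodule ℝ (E n), Module.finrank ℝ H = n - 1 →
      ∃ P : MvPolynomial (Fin n) ℝ, P.IsHomogeneous m ∧ ∀ v ∈ H, v ≠ 0 → W v = evalP P v)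
    (a b : E n) :
    ∃ p : Polynomial ℝ, p.natDegree ≤ m ∧ ∀ t, update W 0 0 (a + t • b) = p.eval t := by
  obtain ⟨H, hH, ha, hb⟩ := Submodule.exists_finrank_add_one_eq_of_mem_of_mem (K := ℝ)
    (by simpa using hn) a b
  obtain ⟨P, hP, hPW⟩ := hres H (by rw [finrank_euclideanSpace_fin] at hH; omega)
  have hWP (v : E n) (hv : v ∈ H) : update W 0 0 v = MvPolynomial.eval v.ofLp P := by
    by_cases hv0 : v = 0
    · simpa [hv0, zero_pow (by omega : m ≠ 0)] using (hP.eval_smul 0 0).symm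
    · rw [update_of_ne hv0]
      exact hPW v hv hv0
  obtain ⟨p, hpm, hp⟩ :=
    MvPolynomial.exists_natDegree_le_eval_add_smul hP.totalDegree_le a.ofLp b.ofLp
  exact ⟨p, hpm, fun t => (hWP _ (H.add_mem ha (H.smul_mem t hb))).trans (hp t)⟩

theorem xray_stmt0_general {n m : ℕ} (hn : 2 < n) (hm : 1 ≤ m) (W : E n → ℝ)
    (hhom : ∀ t : ℝ, 0 < t → ∀ v : E n, v ≠ 0 → W (t • v) = t ^ m * W v)
    (hres : ∀ H : Submodule ℝ (E n), Module.finrank ℝ H = n - 1 →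
      ∃ P : MvPolynomial (Fin n) ℝ, P.IsHomogeneous m ∧ ∀ v ∈ H, v ≠ (0 : E n) → W v = evalP P v) :
    ∃ P : MvPolynomial (Fin n) ℝ, P.IsHomogeneous m ∧ ∀ v : E n, v ≠ 0 → W v = evalP P v := by
  obtain ⟨Q, hQ⟩ := MvPolynomial.exists_eval_eq_of_forall_update_eq_eval m
    (update W 0 0 ∘ WithLp.toLp 2) fun x i => by
      obtain ⟨p, hpm, hp⟩ := exists_natDegree_le_update_zero_add_smul hn hm W hres
        (WithLp.toLp 2 (update x i 0)) (EuclideanSpace.single i 1)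
      refine ⟨p, hpm, fun t => (congrArg (update W 0 0) ?_).trans (hp t)⟩
      ext j
      by_cases hji : j = i <;> simp [hji]
  have hWQ (v : E n) (hv : v ≠ 0) : W v = MvPolynomial.eval v.ofLp Q := by
    simpa [hv] using hQ v.ofLp
  refine ⟨MvPolynomial.homogeneousComponent m Q,
    MvPolynomial.homogeneousComponent_isHomogeneous m Q, fun v hv => ?_⟩
  rw [hWQ v hv]
  refine (MvPolynomial.eval_homogeneousComponent_eq_of_eval_smul (Set.Ioi_infinite 0)
    fun t ht => ?_).symm
  rw [← WithLp.ofLp_smul, ← hWQ _ (smul_ne_zero ht.ne' hv), hhom t ht v hv, hWQ v hv]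

/-- A function `W : E \ {0} → ℝ`, continuous and positively homogeneous of degree `m`,
whose restriction to every hyperplane is a homogeneous polynomial of degree `m`,
is a homogeneous polynomial of degree `m` on all of `E`. -/
theorem xray_stmt0 {n m : ℕ} (hn : 2 < n) (hm : 1 ≤ m) (W : E n → ℝ)
    (hc : ContinuousOn W {v : E n | v ≠ 0})
    (hhom : ∀ t : ℝ, 0 < t → ∀ v : E n, v ≠ 0 → W (t • v) = t ^ m * W v)
    (hres : ∀ H : Submodule ℝ (E n), Module.finrank ℝ H = n - 1 →
      ∃ P : MvPolynomial (Fin n) ℝ, P.IsHomogeneous m ∧ ∀ v ∈ H, v ≠ (0 : E n) → W v = evalP P v) :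
    ∃ P : MvPolynomial (Fin n) ℝ, P.IsHomogeneous m ∧ ∀ v : E n, v ≠ 0 → W v = evalP P v :=
  xray_stmt0_general hn hm W hhom hres
end
end

section
/- Let E be a Euclidean space of dimension n > 2, W a smooth function on the unit sphere S^{n-1} ⊂ E, and m ≥ 0. Then W is a sum of spherical harmonics of degree at most m if and only if for every nonzero covector ξ ∈ E*, the restriction of W to the hypersphere S^{n-2}_ξ = {v ∈ S^{n-1} : ξ(v) = 0} is a sum of spherical harmonics of degree at most m on S^{n-2}_ξ. -/
open scoped RealInnerProductSpace

noncomputable section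

/-- The unit sphere `S^{n-1}`. -/
def sphereS (n : ℕ) : Set (E n) := Metric.sphere 0 1

/-- The hypersphere `S^{n-2}_ξ = {v ∈ S^{n-1} : ⟨w, v⟩ = 0}` cut out by the covector dual
to `w`. -/
def subSphere {n : ℕ} (w : E n) : Set (E n) :=
  Metric.sphere 0 1 ∩ {v : E n | ⟪w, v⟫ = 0}

/-- `f` is, on the set `S`, a sum of spherical harmonics of degree at most `m`:
equivalently, it agrees on `S` with (the restriction of) a polynomial of total degree `≤ m`. -/
def IsDegLE {n : ℕ} (m : ℕ) (S : Set (E n)) (f : E n → ℝ) : Prop :=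
  ∃ P : MvPolynomial (Fin n) ℝ, P.totalDegree ≤ m ∧ ∀ v ∈ S, f v = evalP P v

open MvPolynomial


lemma eval_homog_smul {n k : ℕ} {φ : MvPolynomial (Fin n) ℝ} (hφ : φ.IsHomogeneous k)
    (c : ℝ) (x : Fin n → ℝ) :
    MvPolynomial.eval (fun i => c * x i) φ = c ^ k * MvPolynomial.eval x φ := by
  rw [MvPolynomial.eval_eq', MvPolynomial.eval_eq', Finset.mul_sum]
  apply Finset.sum_congr rfl
  intro d hd
  have hdeg : ∑ i, d i = k := by
    have h1 := hφ (MvPolynomial.mem_support_iff.mp hd)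
    rw [Finsupp.weight_apply] at h1
    rw [← h1]
    rw [Finsupp.sum]
    rw [Finset.sum_subset (Finset.subset_univ d.support)]
    · simp
    · intro i _ hi
      simp [Finsupp.notMem_support_iff.mp hi]
  calc φ.coeff d * ∏ i, (c * x i) ^ d i
      = φ.coeff d * ((∏ i, c ^ d i) * ∏ i, x i ^ d i) := by
        rw [← Finset.prod_mul_distrib]; simp_rw [mul_pow]
    _ = c ^ k * (φ.coeff d * ∏ i, x i ^ d i) := by
        rw [Finset.prod_pow_eq_pow_sum, hdeg]; ring


lemma interp (d : ℕ) : ∀ (n : ℕ) (a b : Fin n → ℝ) (F : (Fin n → ℝ) → ℝ),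
    (∀ (i : Fin n) (x : Fin n → ℝ), (∀ j, x j ∈ Set.Ioo (a j) (b j)) →
      ∃ p : Polynomial ℝ, p.natDegree ≤ d ∧
        ∀ t ∈ Set.Ioo (a i) (b i), F (Function.update x i t) = Polynomial.eval t p) →
    ∃ G : MvPolynomial (Fin n) ℝ,
      ∀ x, (∀ j, x j ∈ Set.Ioo (a j) (b j)) → F x = MvPolynomial.eval x G := by
  intro n
  induction n with
  | zero =>
    intro a b F _
    refine ⟨MvPolynomial.C (F (fun i => i.elim0)), fun x _ => ?_⟩
    rw [MvPolynomial.eval_C]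
    congr 1
    ext i
    exact i.elim0
  | succ n ih =>
    intro a b F hF
    by_cases hab : a (Fin.last n) < b (Fin.last n)
    swap
    · refine ⟨0, fun x hx => absurd (hx (Fin.last n)) ?_⟩
      intro h
      exact hab (lt_trans h.1 h.2)
    -- choose d+1 nodes in the last interval
    obtain ⟨T, hTsub, hTcard⟩ := (Set.Ioo_infinite hab).exists_subset_card_eq (d + 1)
    -- for each node z, apply induction hypothesis to the sliced function
    have key : ∀ z : ℝ, z ∈ Set.Ioo (a (Fin.last n)) (b (Fin.last n)) →
        ∃ G : MvPolynomial (Fin n) ℝ,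
          ∀ y : Fin n → ℝ, (∀ j, y j ∈ Set.Ioo (a j.castSucc) (b j.castSucc)) →
            F (Fin.snoc y z) = MvPolynomial.eval y G := by
      intro z hz
      apply ih (fun i => a i.castSucc) (fun i => b i.castSucc) (fun y => F (Fin.snoc y z))
      intro i y hy
      have hbox : ∀ j, (Fin.snoc y z : Fin (n+1) → ℝ) j ∈ Set.Ioo (a j) (b j) := by
        intro j
        refine Fin.lastCases ?_ ?_ j
        · simpa using hz
        · intro j'; simpa using hy j'
      obtain ⟨p, hp1, hp2⟩ := hF i.castSucc (Fin.snoc y z) hbox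
      refine ⟨p, hp1, fun t ht => ?_⟩
      rw [← hp2 t ht, Fin.snoc_update]
    choose G hG using fun z hz => key z hz
    -- the global polynomial
    classical
    refine ⟨∑ z ∈ T.attach,
        (MvPolynomial.rename Fin.castSucc (G z.1 (hTsub z.2))) *
          Polynomial.eval₂ (MvPolynomial.C) (MvPolynomial.X (Fin.last n))
            (Lagrange.basis T id z.1), ?_⟩
    intro x hx
    obtain ⟨p, hp1, hp2⟩ := hF (Fin.last n) x hx
    have hxl := hx (Fin.last n)
    have hFx : F x = Polynomial.eval (x (Fin.last n)) p := by
      rw [← hp2 _ hxl, Function.update_eq_self]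
    have hdeg : p.degree < (T.card : ℕ) := by
      rw [hTcard]
      exact lt_of_le_of_lt Polynomial.degree_le_natDegree (by exact_mod_cast Nat.lt_succ_of_le hp1)
    have hinj : Set.InjOn (id : ℝ → ℝ) T := Function.injective_id.injOn
    have hinterp := Lagrange.eq_interpolate hinj hdeg
    rw [map_sum]
    have hterm : ∀ z ∈ T.attach,
        MvPolynomial.eval x ((MvPolynomial.rename Fin.castSucc (G z.1 (hTsub z.2))) *
          Polynomial.eval₂ (MvPolynomial.C) (MvPolynomial.X (Fin.last n))
            (Lagrange.basis T id z.1))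
        = Polynomial.eval z.1 p * Polynomial.eval (x (Fin.last n)) (Lagrange.basis T id z.1) := by
      intro z _
      rw [map_mul]
      have e1 : MvPolynomial.eval x (MvPolynomial.rename Fin.castSucc (G z.1 (hTsub z.2)))
          = MvPolynomial.eval (Fin.init x) (G z.1 (hTsub z.2)) := by
        rw [MvPolynomial.eval_rename]; rfl
      have e2 : MvPolynomial.eval x (Polynomial.eval₂ (MvPolynomial.C)
            (MvPolynomial.X (Fin.last n)) (Lagrange.basis T id z.1))
          = Polynomial.eval (x (Fin.last n)) (Lagrange.basis T id z.1) := by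
        rw [Polynomial.hom_eval₂]
        have hid : (MvPolynomial.eval x).comp MvPolynomial.C = RingHom.id ℝ := by
          ext r; simp
        simp [Polynomial.eval₂_eq_eval_map, hid]
      rw [e1, e2]
      have e3 : MvPolynomial.eval (Fin.init x) (G z.1 (hTsub z.2)) = Polynomial.eval z.1 p := by
        have hyz : F (Fin.snoc (Fin.init x) z.1) = MvPolynomial.eval (Fin.init x) (G z.1 (hTsub z.2)) := by
          apply hG
          intro j
          exact hx j.castSucc
        rw [← hyz]
        have : (Fin.snoc (Fin.init x) z.1 : Fin (n+1) → ℝ) = Function.update x (Fin.last n) z.1 := by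
          conv_rhs => rw [← Fin.snoc_init_self x]
          rw [Fin.update_snoc_last]
        rw [this]
        exact hp2 _ (hTsub z.2)
      rw [e3]
    rw [Finset.sum_congr rfl hterm, hFx]
    conv_lhs => rw [hinterp]
    rw [Lagrange.interpolate_apply, Polynomial.eval_finset_sum]
    rw [← Finset.sum_attach T]
    apply Finset.sum_congr rfl
    intro z _
    simp [mul_comm]


lemma line_poly {n : ℕ} (Q : MvPolynomial (Fin n) ℝ) (x v : Fin n → ℝ) :
    ∃ p : Polynomial ℝ, p.natDegree ≤ Q.totalDegree ∧
      ∀ t : ℝ, MvPolynomial.eval (fun i => x i + t * v i) Q = Polynomial.eval t p := by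
  refine ⟨MvPolynomial.eval₂ Polynomial.C
      (fun i => Polynomial.C (x i) + Polynomial.C (v i) * Polynomial.X) Q, ?_, ?_⟩
  · rw [MvPolynomial.eval₂_eq]
    apply Polynomial.natDegree_sum_le_of_forall_le
    intro d hd
    refine le_trans (Polynomial.natDegree_mul_le) ?_
    rw [Polynomial.natDegree_C, zero_add]
    refine le_trans (Polynomial.natDegree_prod_le _ _) ?_
    refine le_trans (Finset.sum_le_sum (fun i _ => Polynomial.natDegree_pow_le)) ?_
    have h1 : ∀ i : Fin n, (Polynomial.C (x i) + Polynomial.C (v i) * Polynomial.X).natDegree ≤ 1 := by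
      intro i
      refine le_trans (Polynomial.natDegree_add_le _ _) ?_
      simp [Polynomial.natDegree_C]
      exact Polynomial.natDegree_C_mul_le _ _ |>.trans (by simp)
    refine le_trans (Finset.sum_le_sum (fun i _ => Nat.mul_le_mul_left (d i) (h1 i))) ?_
    simp only [mul_one]
    exact MvPolynomial.le_totalDegree hd
  · intro t
    have := MvPolynomial.eval₂_comp_left (Polynomial.evalRingHom t) Polynomial.C
      (fun i => Polynomial.C (x i) + Polynomial.C (v i) * Polynomial.X) Q
    simp only [Polynomial.coe_evalRingHom] at this
    rw [this]
    have hc : (Polynomial.evalRingHom t).comp Polynomial.C = RingHom.id ℝ := by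
      ext r; simp
    rw [hc]
    have hg : (Polynomial.eval t ∘ fun i => Polynomial.C (x i) + Polynomial.C (v i) * Polynomial.X)
        = fun i => x i + t * v i := by
      funext i; simp; ring
    rw [hg]
    rfl


lemma evalP_analytic {n : ℕ} (P : MvPolynomial (Fin n) ℝ) :
    AnalyticOnNhd ℝ (fun x : Fin n → ℝ => MvPolynomial.eval x P) Set.univ := by
  induction P using MvPolynomial.induction_on with
  | C a => simpa using analyticOnNhd_const
  | add p q hp hq => simp only [map_add]; exact hp.add hq
  | mul_X p i hp =>
    simp only [map_mul, MvPolynomial.eval_X]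
    exact hp.mul ((ContinuousLinearMap.proj i : (Fin n → ℝ) →L[ℝ] ℝ).analyticOnNhd _)

lemma poly_eq_of_eqOn_open {n : ℕ} (P Q : MvPolynomial (Fin n) ℝ) {U : Set (Fin n → ℝ)}
    (hU : IsOpen U) {x₀ : Fin n → ℝ} (hx₀ : x₀ ∈ U)
    (h : ∀ x ∈ U, MvPolynomial.eval x P = MvPolynomial.eval x Q) :
    ∀ x, MvPolynomial.eval x P = MvPolynomial.eval x Q := by
  intro x
  refine (evalP_analytic P).eqOn_of_preconnected_of_eventuallyEq (evalP_analytic Q)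
    isPreconnected_univ (Set.mem_univ x₀) ?_ (Set.mem_univ x)
  filter_upwards [hU.mem_nhds hx₀] with y hy using h y hy

lemma exists_orth {n : ℕ} (hn : 2 < n) (x v : E n) :
    ∃ w : E n, w ≠ 0 ∧ ⟪w, x⟫ = 0 ∧ ⟪w, v⟫ = 0 := by
  classical
  set K : Submodule ℝ (E n) := Submodule.span ℝ (↑({x, v} : Finset (E n))) with hK
  have hdim : Module.finrank ℝ K ≤ 2 := by
    refine le_trans (finrank_span_le_card _) ?_
    rw [Finset.toFinset_coe]
    exact le_trans (Finset.card_insert_le _ _) (by simp)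
  have horth : 0 < Module.finrank ℝ Kᗮ := by
    have h := K.finrank_add_finrank_orthogonal
    rw [finrank_euclideanSpace_fin] at h
    omega
  obtain ⟨w, hw⟩ := Module.finrank_pos_iff_exists_ne_zero.mp horth
  refine ⟨w.1, fun h => hw (by exact_mod_cast ZeroMemClass.coe_eq_zero.mp h), ?_, ?_⟩
  · have := w.2 x (Submodule.subset_span (by simp))
    rwa [real_inner_comm] at this
  · have := w.2 v (Submodule.subset_span (by simp))
    rwa [real_inner_comm] at this

/-- the sum-of-squares polynomial -/
def NP (n : ℕ) : MvPolynomial (Fin n) ℝ := ∑ i, MvPolynomial.X i ^ 2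

lemma evalP_NP {n : ℕ} (y : E n) : evalP (NP n) y = ‖y‖ ^ 2 := by
  have h : ‖y‖ ^ 2 = ∑ i, y i ^ 2 := by
    rw [EuclideanSpace.norm_eq, Real.sq_sqrt]
    · apply Finset.sum_congr rfl
      intro i _
      rw [Real.norm_eq_abs, sq_abs]
    · exact Finset.sum_nonneg fun i _ => sq_nonneg _
  rw [h, evalP, NP, map_sum]
  apply Finset.sum_congr rfl
  intro i _
  simp

lemma totalDegree_NP_pow {n j : ℕ} : ((NP n) ^ j).totalDegree ≤ 2 * j := by
  refine le_trans (MvPolynomial.totalDegree_pow _ _) ?_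
  have h2 : (NP n).totalDegree ≤ 2 := by
    refine le_trans (MvPolynomial.totalDegree_finset_sum _ _) ?_
    apply Finset.sup_le
    intro i _
    exact le_of_eq (MvPolynomial.totalDegree_X_pow _ _)
  calc j * (NP n).totalDegree ≤ j * 2 := Nat.mul_le_mul_left j h2
    _ = 2 * j := mul_comm _ _

lemma hyperplane_poly {n m d : ℕ}
    (hd_par : ∀ k, k ≤ m → k % 2 = d % 2 → k ≤ d)
    (W : E n → ℝ) (w : E n) (P : MvPolynomial (Fin n) ℝ) (hP : P.totalDegree ≤ m)
    (hWP : ∀ v ∈ subSphere w, W v = evalP P v) :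
    ∃ Q : MvPolynomial (Fin n) ℝ, Q.totalDegree ≤ d ∧
      ∀ y : E n, y ≠ 0 → ⟪w, y⟫ = 0 →
        ‖y‖ ^ d * ((W (‖y‖⁻¹ • y) + (-1 : ℝ)^d * W (-(‖y‖⁻¹ • y))) / 2) = evalP Q y := by
  classical
  set S : Finset ℕ := (Finset.range (m+1)).filter (fun k => k % 2 = d % 2) with hS
  have hSd : ∀ k ∈ S, k ≤ d := by
    intro k hk
    rw [hS, Finset.mem_filter, Finset.mem_range] at hk
    exact hd_par k (Nat.lt_succ_iff.mp hk.1) hk.2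
  refine ⟨∑ k ∈ S, (NP n) ^ ((d - k)/2) * MvPolynomial.homogeneousComponent k P, ?_, ?_⟩
  · refine le_trans (MvPolynomial.totalDegree_finset_sum _ _) ?_
    apply Finset.sup_le
    intro k hk
    refine le_trans (MvPolynomial.totalDegree_mul _ _) ?_
    have h1 := totalDegree_NP_pow (n := n) (j := (d - k)/2)
    have h2 := (MvPolynomial.homogeneousComponent_isHomogeneous k P).totalDegree_le
    have hk2 : k % 2 = d % 2 := by
      rw [hS, Finset.mem_filter] at hk; exact hk.2
    have hkd := hSd k hk
    omega
  · intro y hy hwy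
    have hny : (0 : ℝ) < ‖y‖ := norm_pos_iff.mpr hy
    set u : E n := ‖y‖⁻¹ • y with hu
    have hun : ‖u‖ = 1 := by
      rw [hu, norm_smul, Real.norm_eq_abs, abs_inv, abs_of_pos hny]
      field_simp
    have husph : u ∈ subSphere w := by
      constructor
      · simpa [mem_sphere_iff_norm] using hun
      · show ⟪w, u⟫ = 0
        rw [hu, real_inner_smul_right, hwy, mul_zero]
    have hnusph : -u ∈ subSphere w := by
      constructor
      · simpa [mem_sphere_iff_norm] using hun
      · show ⟪w, -u⟫ = 0
        rw [inner_neg_right, husph.2, neg_zero]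
    rw [hWP u husph, hWP (-u) hnusph]
    -- expand P into homogeneous components
    have hcomp : ∀ z : E n, evalP P z = ∑ k ∈ Finset.range (P.totalDegree + 1),
        evalP (MvPolynomial.homogeneousComponent k P) z := by
      intro z
      conv_lhs => rw [evalP, ← MvPolynomial.sum_homogeneousComponent P]
      rw [map_sum]
      rfl
    have hneg : ∀ k, evalP (MvPolynomial.homogeneousComponent k P) (-u)
        = (-1 : ℝ)^k * evalP (MvPolynomial.homogeneousComponent k P) u := by
      intro k
      have : (fun i => (-u : E n) i) = fun i => (-1 : ℝ) * u i := by
        funext i; simp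
      rw [evalP, this, eval_homog_smul (MvPolynomial.homogeneousComponent_isHomogeneous k P)]
      rfl
    have hscale : ∀ k, evalP (MvPolynomial.homogeneousComponent k P) u
        = (‖y‖⁻¹) ^ k * evalP (MvPolynomial.homogeneousComponent k P) y := by
      intro k
      have : (fun i => (u : E n) i) = fun i => ‖y‖⁻¹ * y i := by
        funext i; simp [hu]
      rw [evalP, this, eval_homog_smul (MvPolynomial.homogeneousComponent_isHomogeneous k P)]
      rfl
    rw [hcomp u, hcomp (-u)]
    -- the parity-filtered sum
    have key : (∑ k ∈ Finset.range (P.totalDegree + 1),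
          evalP (MvPolynomial.homogeneousComponent k P) u
        + (-1:ℝ)^d * ∑ k ∈ Finset.range (P.totalDegree + 1),
          evalP (MvPolynomial.homogeneousComponent k P) (-u)) / 2
        = ∑ k ∈ (Finset.range (P.totalDegree + 1)).filter (fun k => k % 2 = d % 2),
          evalP (MvPolynomial.homogeneousComponent k P) u := by
      rw [Finset.mul_sum, ← Finset.sum_add_distrib, Finset.sum_div]
      rw [← Finset.sum_filter_add_sum_filter_not (Finset.range (P.totalDegree + 1))
        (fun k => k % 2 = d % 2)]
      have hzero : ∑ k ∈ (Finset.range (P.totalDegree + 1)).filter (fun k => ¬ k % 2 = d % 2),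
          (evalP (MvPolynomial.homogeneousComponent k P) u
            + (-1:ℝ)^d * evalP (MvPolynomial.homogeneousComponent k P) (-u)) / 2 = 0 := by
        apply Finset.sum_eq_zero
        intro k hk
        rw [Finset.mem_filter] at hk
        rw [hneg k]
        have hsgn : (-1:ℝ)^d * ((-1:ℝ)^k) = -1 := by
          rw [← pow_add]
          refine Odd.neg_one_pow (Nat.odd_iff.mpr ?_)
          have := hk.2
          omega
        rw [← mul_assoc, hsgn]
        ring
      rw [hzero, add_zero]
      apply Finset.sum_congr rfl
      intro k hk
      rw [Finset.mem_filter] at hk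
      rw [hneg k]
      have hsgn : (-1:ℝ)^d * ((-1:ℝ)^k) = 1 := by
        have : (d + k) % 2 = 0 := by omega
        rw [← pow_add]
        exact Even.neg_one_pow (Nat.even_iff.mpr this)
      rw [← mul_assoc, hsgn]
      ring
    rw [key, evalP, map_sum, Finset.mul_sum]
    have hsub : (Finset.range (P.totalDegree + 1)).filter (fun k => k % 2 = d % 2) ⊆ S := by
      intro k hk
      rw [Finset.mem_filter, Finset.mem_range] at hk
      rw [hS, Finset.mem_filter, Finset.mem_range]
      constructor
      · omega
      · exact hk.2
    rw [Finset.sum_subset hsub ?van]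
    case van =>
      intro k hk hnk
      have hkD : P.totalDegree < k := by
        rw [hS, Finset.mem_filter, Finset.mem_range] at hk
        rw [Finset.mem_filter, Finset.mem_range] at hnk
        by_contra h
        exact hnk ⟨by omega, hk.2⟩
      rw [MvPolynomial.homogeneousComponent_eq_zero _ _ hkD]
      simp [evalP]
    apply Finset.sum_congr rfl
    intro k hk
    have hkd := hSd k hk
    have hkp : k % 2 = d % 2 := by
      rw [hS, Finset.mem_filter] at hk; exact hk.2
    rw [hscale k, map_mul]
    have e1 : MvPolynomial.eval (fun i => y i) ((NP n)^((d-k)/2)) = ‖y‖^(d-k) := by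
      rw [map_pow]
      have hN := evalP_NP y
      rw [evalP] at hN
      rw [hN, ← pow_mul]
      congr 1
      omega
    rw [e1]
    rw [← mul_assoc, inv_pow, ← pow_sub₀ _ (ne_of_gt hny) hkd]
    rfl


/-- top homogeneous component of a nonzero polynomial is nonzero -/
lemma top_component_ne_zero {n : ℕ} (G : MvPolynomial (Fin n) ℝ) (hG : G ≠ 0) :
    MvPolynomial.homogeneousComponent G.totalDegree G ≠ 0 := by
  obtain ⟨dmax, hdmem, hdeq⟩ := Finset.exists_mem_eq_sup G.support
    (MvPolynomial.support_nonempty.mpr hG)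
    (fun m => Multiset.card (Finsupp.toMultiset m))
  intro h
  have hc : MvPolynomial.coeff dmax (MvPolynomial.homogeneousComponent G.totalDegree G)
      = MvPolynomial.coeff dmax G := by
    rw [MvPolynomial.coeff_homogeneousComponent, if_pos]
    show Finsupp.degree dmax = G.totalDegree
    rw [MvPolynomial.totalDegree_eq, hdeq, Finsupp.card_toMultiset]
    rfl
  rw [h] at hc
  simp only [MvPolynomial.coeff_zero] at hc
  exact MvPolynomial.mem_support_iff.mp hdmem hc.symm

lemma claimD {n d : ℕ} (F : E n → ℝ) (G : MvPolynomial (Fin n) ℝ)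
    (hline : ∀ x v : E n, ∃ p : Polynomial ℝ, p.natDegree ≤ d ∧
       ∀ t : ℝ, x + t • v ≠ 0 → F (x + t • v) = Polynomial.eval t p)
    (hG : ∀ y : E n, y ≠ 0 → F y = evalP G y) :
    G.totalDegree ≤ d := by
  by_contra hDd
  push_neg at hDd
  set D := G.totalDegree with hD
  have hGne : G ≠ 0 := by
    intro h
    rw [h] at hD
    simp [MvPolynomial.totalDegree_zero] at hD
    omega
  have htop := top_component_ne_zero G hGne
  -- get a point where the top component doesn't vanish
  have hvv : ∃ vv : Fin n → ℝ, MvPolynomial.eval vv (MvPolynomial.homogeneousComponent D G) ≠ 0 := by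
    by_contra h
    push_neg at h
    apply htop
    apply MvPolynomial.funext
    intro x
    rw [h x, map_zero]
  obtain ⟨vv, hvvne⟩ := hvv
  set vE : E n := WithLp.toLp 2 vv with hvE
  have hvv0 : vE ≠ 0 := by
    intro h
    apply hvvne
    have hz : (fun i => (0:ℝ) * vv i) = vv := by
      funext i
      rw [zero_mul]
      have h2 : vE i = (0 : E n) i := by rw [h]
      rw [PiLp.zero_apply] at h2
      exact h2.symm
    have h3 := eval_homog_smul (MvPolynomial.homogeneousComponent_isHomogeneous D G) 0 vv
    rw [hz] at h3
    show MvPolynomial.eval vv (MvPolynomial.homogeneousComponent D G) = 0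
    rw [h3, zero_pow (by omega : D ≠ 0)]
    ring
  obtain ⟨p, hpd, hpe⟩ := hline 0 vE
  set q : Polynomial ℝ := ∑ k ∈ Finset.range (D + 1),
    Polynomial.C (MvPolynomial.eval vv (MvPolynomial.homogeneousComponent k G)) * Polynomial.X ^ k with hq
  have hqe : ∀ t : ℝ, t ≠ 0 → Polynomial.eval t q = Polynomial.eval t p := by
    intro t ht
    have hne : (0 : E n) + t • vE ≠ 0 := by
      simpa using smul_ne_zero ht hvv0
    rw [← hpe t hne]
    have h1 : F ((0:E n) + t • vE) = evalP G ((0:E n) + t • vE) := hG _ hne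
    rw [h1, evalP]
    have h2 : (fun i => ((0:E n) + t • vE) i) = fun i => t * vv i := by
      funext i
      show (0:E n) i + (t • vE) i = t * vv i
      rw [PiLp.zero_apply, PiLp.smul_apply, zero_add, smul_eq_mul]
    rw [h2]
    conv_rhs => rw [← MvPolynomial.sum_homogeneousComponent G]
    rw [map_sum, hq, Polynomial.eval_finset_sum]
    apply Finset.sum_congr rfl
    intro k hk
    rw [eval_homog_smul (MvPolynomial.homogeneousComponent_isHomogeneous k G)]
    rw [Polynomial.eval_mul, Polynomial.eval_C, Polynomial.eval_pow, Polynomial.eval_X]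
    ring
  have hpq : p = q := by
    apply Polynomial.eq_of_infinite_eval_eq
    apply Set.Infinite.mono (s := {t : ℝ | t ≠ 0})
    · intro t ht
      exact (hqe t ht).symm
    · exact Set.Finite.infinite_compl (Set.finite_singleton 0)
  have hcoeff : q.coeff D = MvPolynomial.eval vv (MvPolynomial.homogeneousComponent D G) := by
    rw [hq, Polynomial.finset_sum_coeff]
    rw [Finset.sum_eq_single D]
    · rw [Polynomial.coeff_C_mul, Polynomial.coeff_X_pow, if_pos rfl, mul_one]
    · intro k _ hkD
      rw [Polynomial.coeff_C_mul, Polynomial.coeff_X_pow, if_neg (Ne.symm hkD), mul_zero]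
    · intro h
      exact absurd (Finset.self_mem_range_succ D) h
  have : q.coeff D = 0 := by
    rw [← hpq]
    exact Polynomial.coeff_eq_zero_of_natDegree_lt (by omega)
  rw [hcoeff] at this
  exact hvvne this

def Fs {n : ℕ} (d : ℕ) (W : E n → ℝ) (y : E n) : ℝ :=
  ‖y‖ ^ d * ((W (‖y‖⁻¹ • y) + (-1:ℝ)^d * W (-(‖y‖⁻¹ • y))) / 2)

lemma claimA {n m d : ℕ} (hn : 2 < n)
    (hd_par : ∀ k, k ≤ m → k % 2 = d % 2 → k ≤ d)
    (W : E n → ℝ) (H : ∀ w : E n, w ≠ 0 → IsDegLE m (subSphere w) W)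
    (x v : E n) :
    ∃ p : Polynomial ℝ, p.natDegree ≤ d ∧ ∀ t : ℝ, x + t • v ≠ 0 →
      Fs d W (x + t • v) = Polynomial.eval t p := by
  obtain ⟨w, hw0, hwx, hwv⟩ := exists_orth hn x v
  obtain ⟨P, hP, hWP⟩ := H w hw0
  obtain ⟨Q, hQd, hQ⟩ := hyperplane_poly hd_par W w P hP hWP
  obtain ⟨p, hp, hpe⟩ := line_poly Q (fun i => x i) (fun i => v i)
  refine ⟨p, le_trans hp hQd, ?_⟩
  intro t ht
  have hw0' : ⟪w, x + t • v⟫ = 0 := by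
    rw [inner_add_right, real_inner_smul_right, hwx, hwv]
    ring
  rw [Fs, hQ _ ht hw0', evalP]
  have h2 : (fun i => (x + t • v) i) = fun i => x i + t * v i := by
    funext i
    rw [PiLp.add_apply, PiLp.smul_apply, smul_eq_mul]
  rw [h2]
  exact hpe t

lemma claimB {n d : ℕ} (F : E n → ℝ)
    (hline : ∀ x v : E n, ∃ p : Polynomial ℝ, p.natDegree ≤ d ∧
       ∀ t : ℝ, x + t • v ≠ 0 → F (x + t • v) = Polynomial.eval t p)
    (xb : E n) (hxb : xb ≠ 0) :
    ∃ (G : MvPolynomial (Fin n) ℝ) (U : Set (E n)),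
      IsOpen U ∧ xb ∈ U ∧ (∀ y ∈ U, y ≠ 0) ∧ ∀ y ∈ U, F y = evalP G y := by
  classical
  -- a coordinate where xb is nonzero
  have hex : ∃ i₀ : Fin n, xb i₀ ≠ 0 := by
    by_contra h
    push_neg at h
    apply hxb
    ext i
    exact h i
  obtain ⟨i₀, hi₀⟩ := hex
  set ε : ℝ := |xb i₀| / 2 with hε
  have hεpos : 0 < ε := by
    rw [hε]
    have := abs_pos.mpr hi₀
    linarith
  set a : Fin n → ℝ := fun j => xb j - ε with ha
  set b : Fin n → ℝ := fun j => xb j + ε with hb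
  set U : Set (E n) := {x : E n | ∀ j, x j ∈ Set.Ioo (a j) (b j)} with hU
  have hUopen : IsOpen U := by
    have : U = ⋂ j, (EuclideanSpace.proj j : E n →L[ℝ] ℝ) ⁻¹' (Set.Ioo (a j) (b j)) := by
      ext x
      simp [hU, Set.mem_iInter]
    rw [this]
    exact isOpen_iInter_of_finite fun j =>
      (isOpen_Ioo).preimage (EuclideanSpace.proj j).continuous
  have hxbU : xb ∈ U := by
    intro j
    exact ⟨by simp [ha, hεpos], by simp [hb, hεpos]⟩
  have hI0 : ∀ t ∈ Set.Ioo (a i₀) (b i₀), t ≠ 0 := by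
    intro t ht h0
    rw [h0] at ht
    rcases abs_cases (xb i₀) with ⟨h1, h2⟩ | ⟨h1, h2⟩
    · have := ht.1
      rw [ha] at this
      simp only at this
      rw [hε, h1] at this
      have hne := abs_pos.mpr hi₀
      rw [h1] at hne
      linarith
    · have := ht.2
      rw [hb] at this
      simp only at this
      rw [hε, h1] at this
      have hne := abs_pos.mpr hi₀
      rw [h1] at hne
      linarith
  have hUz : ∀ y ∈ U, y ≠ 0 := by
    intro y hy h0
    apply hI0 (y i₀) (hy i₀)
    rw [h0]
    rfl
  -- apply the interpolation lemma
  have hyp : ∀ (i : Fin n) (x : Fin n → ℝ), (∀ j, x j ∈ Set.Ioo (a j) (b j)) →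
      ∃ p : Polynomial ℝ, p.natDegree ≤ d ∧
        ∀ t ∈ Set.Ioo (a i) (b i), F (WithLp.toLp 2 (Function.update x i t)) = Polynomial.eval t p := by
    intro i x hx
    set xE : E n := WithLp.toLp 2 x with hxE
    -- the line through x in direction eᵢ
    set ei : E n := EuclideanSpace.single i (1:ℝ) with hei
    obtain ⟨p, hpd, hpe⟩ := hline xE ei
    refine ⟨p.comp (Polynomial.X - Polynomial.C (x i)), ?_, ?_⟩
    · rw [Polynomial.natDegree_comp]
      have h1 : (Polynomial.X - Polynomial.C (x i)).natDegree = 1 := by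
        rw [Polynomial.natDegree_X_sub_C]
      rw [h1, mul_one]
      exact hpd
    · intro t ht
      rw [Polynomial.eval_comp]
      simp only [Polynomial.eval_sub, Polynomial.eval_X, Polynomial.eval_C]
      have hupd : WithLp.toLp 2 (Function.update x i t) = xE + (t - x i) • ei := by
        ext j
        rw [PiLp.toLp_apply]
        by_cases hji : j = i
        · subst hji
          rw [Function.update_self]
          show t = xE j + ((t - x j) • ei) j
          rw [PiLp.smul_apply, smul_eq_mul, hei, EuclideanSpace.single_apply, if_pos rfl]
          ring
        · rw [Function.update_of_ne hji]
          show x j = xE j + ((t - x i) • ei) j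
          rw [PiLp.smul_apply, smul_eq_mul, hei, EuclideanSpace.single_apply, if_neg hji]
          ring
      have hne : xE + (t - x i) • ei ≠ 0 := by
        rw [← hupd]
        intro h0
        by_cases hii : i = i₀
        · subst hii
          apply hI0 t ht
          have h1 : (WithLp.toLp 2 (Function.update x i t)) i = (0 : E n) i := by rw [h0]
          rw [PiLp.toLp_apply, Function.update_self, PiLp.zero_apply] at h1
          exact h1
        · apply hI0 (x i₀) (hx i₀)
          have h1 : (WithLp.toLp 2 (Function.update x i t)) i₀ = (0 : E n) i₀ := by rw [h0]
          rw [PiLp.toLp_apply, Function.update_of_ne (fun h => hii h.symm), PiLp.zero_apply] at h1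
          exact h1
      have := hpe (t - x i) hne
      rw [← hupd] at this
      exact this
  obtain ⟨G, hG⟩ := interp d n a b (fun x => F (WithLp.toLp 2 x)) hyp
  exact ⟨G, U, hUopen, hxbU, hUz, fun y hy => hG (WithLp.ofLp y) hy⟩

lemma evalP_analyticE {n : ℕ} (P : MvPolynomial (Fin n) ℝ) :
    AnalyticOnNhd ℝ (fun x : E n => evalP P x) Set.univ := by
  induction P using MvPolynomial.induction_on with
  | C a =>
    have : (fun x : E n => evalP (MvPolynomial.C a) x) = fun _ => a := by
      funext x; simp [evalP]
    rw [this]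
    exact analyticOnNhd_const
  | add p q hp hq =>
    have : (fun x : E n => evalP (p + q) x) = fun x => evalP p x + evalP q x := by
      funext x; simp [evalP]
    rw [this]
    exact hp.add hq
  | mul_X p i hp =>
    have : (fun x : E n => evalP (p * MvPolynomial.X i) x)
        = fun x => evalP p x * (EuclideanSpace.proj i : E n →L[ℝ] ℝ) x := by
      funext x; simp [evalP]
    rw [this]
    exact hp.mul ((EuclideanSpace.proj i : E n →L[ℝ] ℝ).analyticOnNhd _)

lemma poly_eqE {n : ℕ} (P Q : MvPolynomial (Fin n) ℝ) {U : Set (E n)}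
    (hU : IsOpen U) {x₀ : E n} (hx₀ : x₀ ∈ U)
    (h : ∀ x ∈ U, evalP P x = evalP Q x) :
    ∀ x : E n, evalP P x = evalP Q x := by
  intro x
  refine (evalP_analyticE P).eqOn_of_preconnected_of_eventuallyEq (evalP_analyticE Q)
    isPreconnected_univ (Set.mem_univ x₀) ?_ (Set.mem_univ x)
  filter_upwards [hU.mem_nhds hx₀] with y hy using h y hy

lemma claimC {n d : ℕ} (hn : 2 < n) (F : E n → ℝ)
    (hloc : ∀ xb : E n, xb ≠ 0 → ∃ (G : MvPolynomial (Fin n) ℝ) (U : Set (E n)),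
      IsOpen U ∧ xb ∈ U ∧ (∀ y ∈ U, y ≠ 0) ∧ ∀ y ∈ U, F y = evalP G y) :
    ∃ G : MvPolynomial (Fin n) ℝ, ∀ y : E n, y ≠ 0 → F y = evalP G y := by
  classical
  have hrank : 1 < Module.rank ℝ (E n) := by
    rw [← Module.finrank_eq_rank ℝ (E n), finrank_euclideanSpace_fin]
    exact_mod_cast (by omega : 1 < n)
  have hconn : IsPreconnected ({(0 : E n)}ᶜ) :=
    (isConnected_compl_singleton_of_one_lt_rank hrank (0 : E n)).isPreconnected
  set i0 : Fin n := ⟨0, by omega⟩ with hi0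
  set x₀ : E n := EuclideanSpace.single i0 (1:ℝ) with hx₀def
  have hx₀ : x₀ ≠ 0 := by
    intro h
    have h1 : x₀ i0 = (0 : E n) i0 := by rw [h]
    rw [hx₀def] at h1
    rw [EuclideanSpace.single_apply, if_pos rfl, PiLp.zero_apply] at h1
    exact one_ne_zero h1
  obtain ⟨G₀, U₀, hU₀o, hx₀U, hU₀z, hU₀G⟩ := hloc x₀ hx₀
  refine ⟨G₀, ?_⟩
  set A : Set (E n) := {y | ∃ U : Set (E n), IsOpen U ∧ y ∈ U ∧ (∀ z ∈ U, z ≠ 0) ∧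
    ∀ z ∈ U, F z = evalP G₀ z} with hA
  have hAopen : IsOpen A := by
    rw [isOpen_iff_forall_mem_open]
    rintro y ⟨U, hUo, hyU, hUz, hUG⟩
    exact ⟨U, fun z hz => ⟨U, hUo, hz, hUz, hUG⟩, hUo, hyU⟩
  set B : Set (E n) := {y | y ≠ 0 ∧ y ∉ A} with hB
  have hBopen : IsOpen B := by
    rw [isOpen_iff_forall_mem_open]
    rintro y ⟨hy0, hyA⟩
    obtain ⟨Gy, Uy, hUyo, hyUy, hUyz, hUyG⟩ := hloc y hy0
    refine ⟨Uy, ?_, hUyo, hyUy⟩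
    intro z hz
    refine ⟨hUyz z hz, ?_⟩
    rintro ⟨Uz, hUzo, hzUz, hUzz, hUzG⟩
    apply hyA
    have heq : ∀ x : E n, evalP G₀ x = evalP Gy x := by
      refine poly_eqE G₀ Gy (hUzo.inter hUyo) (Set.mem_inter hzUz hz) ?_
      intro t ⟨ht1, ht2⟩
      rw [← hUzG t ht1, hUyG t ht2]
    refine ⟨Uy, hUyo, hyUy, hUyz, ?_⟩
    intro t ht
    rw [hUyG t ht, heq t]
  -- connectedness argument
  intro y hy0
  by_cases hyA : y ∈ A
  · obtain ⟨U, hUo, hyU, hUz, hUG⟩ := hyA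
    exact hUG y hyU
  · exfalso
    have hcover : ({(0 : E n)}ᶜ : Set (E n)) ⊆ A ∪ B := by
      intro t ht
      by_cases htA : t ∈ A
      · exact Or.inl htA
      · exact Or.inr ⟨by simpa using ht, htA⟩
    have hAne : (({(0 : E n)}ᶜ : Set (E n)) ∩ A).Nonempty :=
      ⟨x₀, by simpa using hx₀, ⟨U₀, hU₀o, hx₀U, hU₀z, hU₀G⟩⟩
    have hBne : (({(0 : E n)}ᶜ : Set (E n)) ∩ B).Nonempty :=
      ⟨y, by simpa using hy0, hy0, hyA⟩
    obtain ⟨z, _, hzA, hzB⟩ := hconn A B hAopen hBopen hcover hAne hBne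
    exact hzB.2 hzA

lemma main_part {n m d : ℕ} (hn : 2 < n)
    (hd_par : ∀ k, k ≤ m → k % 2 = d % 2 → k ≤ d)
    (W : E n → ℝ) (H : ∀ w : E n, w ≠ 0 → IsDegLE m (subSphere w) W) :
    ∃ G : MvPolynomial (Fin n) ℝ, G.totalDegree ≤ d ∧
      ∀ v ∈ sphereS n, (W v + (-1:ℝ)^d * W (-v)) / 2 = evalP G v := by
  have hline := claimA hn hd_par W H
  obtain ⟨G, hG⟩ := claimC (d := d) hn (Fs d W) (fun xb hxb => claimB (Fs d W) hline xb hxb)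
  have hdeg : G.totalDegree ≤ d := claimD (Fs d W) G hline hG
  refine ⟨G, hdeg, ?_⟩
  intro v hv
  have hv1 : ‖v‖ = 1 := by
    have : v ∈ Metric.sphere (0 : E n) 1 := hv
    simpa [mem_sphere_zero_iff_norm] using this
  have hv0 : v ≠ 0 := by
    intro h
    rw [h] at hv1
    simp at hv1
  have hFv := hG v hv0
  rw [Fs, hv1] at hFv
  simpa using hFv

/-- A smooth function on `S^{n-1}` (n > 2) is a sum of spherical harmonics of degree ≤ m
iff its restriction to every hypersphere `S^{n-2}_ξ` is a sum of spherical harmonics of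
degree ≤ m. -/
theorem xray_stmt1 {n m : ℕ} (hn : 2 < n) (W : E n → ℝ) (hW : ContDiff ℝ (⊤ : ℕ∞) W) :
    IsDegLE m (sphereS n) W ↔ ∀ w : E n, w ≠ 0 → IsDegLE m (subSphere w) W := by
  constructor
  · rintro ⟨P, hP, hWP⟩ w hw
    exact ⟨P, hP, fun v hv => hWP v hv.1⟩
  · intro H
    rcases Nat.eq_zero_or_pos m with hm | hm
    · -- constant case
      subst hm
      have hconst : ∀ (P : MvPolynomial (Fin n) ℝ), P.totalDegree = 0 →
          ∀ z₁ z₂ : Fin n → ℝ, MvPolynomial.eval z₁ P = MvPolynomial.eval z₂ P := by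
        intro P hP z₁ z₂
        rw [MvPolynomial.eval_eq, MvPolynomial.eval_eq]
        apply Finset.sum_congr rfl
        intro dd hdd
        have h0 := (MvPolynomial.totalDegree_eq_zero_iff _ P).mp hP dd hdd
        have hsup : dd.support = ∅ := by
          ext i
          simp [Finsupp.mem_support_iff, h0 i]
        rw [hsup]
        simp
      set i0 : Fin n := ⟨0, by omega⟩ with hi0
      set x₀ : E n := EuclideanSpace.single i0 (1:ℝ) with hx₀def
      have hx₀n : ‖x₀‖ = 1 := by
        rw [hx₀def, EuclideanSpace.norm_single]
        norm_num
      refine ⟨MvPolynomial.C (W x₀), by simp, ?_⟩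
      intro v hv
      have hv1 : ‖v‖ = 1 := by
        have : v ∈ Metric.sphere (0 : E n) 1 := hv
        simpa [mem_sphere_zero_iff_norm] using this
      obtain ⟨w, hw0, hwv, hwx₀⟩ := exists_orth hn v x₀
      obtain ⟨P, hP0, hval⟩ := H w hw0
      have hvS : v ∈ subSphere w := ⟨by simpa [mem_sphere_zero_iff_norm] using hv1, hwv⟩
      have hxS : x₀ ∈ subSphere w := ⟨by simpa [mem_sphere_zero_iff_norm] using hx₀n, hwx₀⟩
      rw [hval v hvS]
      have : evalP P v = evalP P x₀ := hconst P (Nat.le_zero.mp hP0) _ _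
      rw [this, ← hval x₀ hxS, evalP]
      simp
    · -- split into even and odd parts
      obtain ⟨Ge, hGed, hGev⟩ := main_part (m := m) (d := 2*(m/2)) hn (by omega) W H
      obtain ⟨Go, hGod, hGov⟩ := main_part (m := m) (d := 2*((m-1)/2)+1) hn (by omega) W H
      refine ⟨Ge + Go, ?_, ?_⟩
      · refine le_trans (MvPolynomial.totalDegree_add _ _) ?_
        apply max_le
        · exact le_trans hGed (by omega)
        · exact le_trans hGod (by omega)
      · intro v hv
        have he := hGev v hv
        have ho := hGov v hv
        have hsgne : ((-1:ℝ))^(2*(m/2)) = 1 := Even.neg_one_pow (even_two_mul _)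
        have hsgno : ((-1:ℝ))^(2*((m-1)/2)+1) = -1 := Odd.neg_one_pow ⟨(m-1)/2, by ring⟩
        rw [hsgne] at he
        rw [hsgno] at ho
        have hsum : W v = (W v + 1 * W (-v))/2 + (W v + (-1) * W (-v))/2 := by ring
        rw [hsum, he, ho, evalP, evalP, evalP, map_add]
end
end

section
/- Let E be a Euclidean space of dimension n and P ∈ H_m(E) a harmonic homogeneous polynomial of degree m. Then for any hyperplane H ⊂ E, the restriction of P to the unit sphere of H is a sum of spherical harmonics on that sphere of degrees m, m-2, m-4, ..., i.e. of degree at most m and of the same parity as m. -/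
set_option linter.unusedSectionVars false
set_option linter.unusedTactic false
set_option linter.unusedVariables false
set_option maxHeartbeats 1000000

open scoped RealInnerProductSpace

noncomputable section

/-- `P` is harmonic: annihilated by the Euclidean Laplacian. -/
def Harm {n : ℕ} (P : MvPolynomial (Fin n) ℝ) : Prop :=
  ∑ i : Fin n, MvPolynomial.pderiv i (MvPolynomial.pderiv i P) = 0

section XAsec
open MvPolynomial Finset
namespace XA

variable {σ : Type*} [Fintype σ] [DecidableEq σ]

/-- Formal Laplacian. -/
def lap (P : MvPolynomial σ ℝ) : MvPolynomial σ ℝ := ∑ i : σ, pderiv i (pderiv i P)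

/-- Squared norm polynomial. -/
def r2 : MvPolynomial σ ℝ := ∑ i : σ, X i * X i

def fact (d : σ →₀ ℕ) : ℝ := ∏ i : σ, Nat.factorial (d i)

lemma fact_pos (d : σ →₀ ℕ) : 0 < fact d :=
  Finset.prod_pos fun i _ => by exact_mod_cast Nat.factorial_pos _

lemma fact_add_single (d : σ →₀ ℕ) (i : σ) :
    fact (d + Finsupp.single i 1) = (d i + 1) * fact d := by
  unfold fact
  rw [← Finset.mul_prod_erase Finset.univ _ (Finset.mem_univ i),
    ← Finset.mul_prod_erase Finset.univ (fun j => (Nat.factorial (d j) : ℝ)) (Finset.mem_univ i)]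
  have h1 : (d + Finsupp.single i 1 : σ →₀ ℕ) i = d i + 1 := by simp
  have h2 : ∏ x ∈ Finset.univ.erase i, (((d + Finsupp.single i 1 : σ →₀ ℕ) x).factorial : ℝ)
      = ∏ x ∈ Finset.univ.erase i, ((d x).factorial : ℝ) := by
    apply Finset.prod_congr rfl
    intro j hj
    have : (d + Finsupp.single i 1 : σ →₀ ℕ) j = d j := by
      simp [Finsupp.single_apply, Ne.symm (Finset.ne_of_mem_erase hj)]
    rw [this]
  rw [h1, Nat.factorial_succ, h2]
  push_cast
  ring

/-- coefficient of a formal partial derivative -/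
lemma coeff_pderiv (i : σ) (Q : MvPolynomial σ ℝ) (e : σ →₀ ℕ) :
    coeff e (pderiv i Q) = (e i + 1) * coeff (e + Finsupp.single i 1) Q := by
  induction Q using MvPolynomial.induction_on' with
  | monomial u a =>
    rw [pderiv_monomial]
    rcases Nat.eq_zero_or_pos (u i) with h0 | hpos
    · have h1 : u - Finsupp.single i 1 = u := by
        ext j
        rcases eq_or_ne j i with rfl | hne
        · simp [h0]
        · simp [Finsupp.single_apply, Ne.symm hne]
      rw [h1]
      have h2 : u ≠ e + Finsupp.single i 1 := by
        intro h
        apply absurd h0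
        rw [h]; simp
      rw [coeff_monomial, coeff_monomial, if_neg h2]
      simp only [mul_zero]
      split <;> simp [h0]
    · have hiff : u - Finsupp.single i 1 = e ↔ u = e + Finsupp.single i 1 := by
        constructor
        · intro h
          rw [← h, tsub_add_cancel_of_le]
          intro j
          rcases eq_or_ne j i with rfl | hne
          · simpa using Nat.one_le_iff_ne_zero.2 (Nat.pos_iff_ne_zero.1 hpos)
          · simp [Finsupp.single_apply, Ne.symm hne]
        · intro h; rw [h, add_tsub_cancel_right]
      rw [coeff_monomial, coeff_monomial]
      by_cases h : u = e + Finsupp.single i 1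
      · rw [if_pos (hiff.2 h), if_pos h]
        have : u i = e i + 1 := by rw [h]; simp
        rw [this]; push_cast; ring
      · rw [if_neg (fun hh => h (hiff.1 hh)), if_neg h, mul_zero]
  | add p q hp hq => simp [map_add, coeff_add, hp, hq, mul_add]


/-- Fischer pairing. -/
def fpair (P Q : MvPolynomial σ ℝ) : ℝ :=
  ∑ d ∈ P.support, fact d * coeff d P * coeff d Q

lemma fpair_eq_sum {P Q : MvPolynomial σ ℝ} {s : Finset (σ →₀ ℕ)} (hs : P.support ⊆ s) :
    fpair P Q = ∑ d ∈ s, fact d * coeff d P * coeff d Q := by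
  apply Finset.sum_subset hs
  intro d _ hd
  rw [MvPolynomial.notMem_support_iff] at hd
  rw [hd]; ring

lemma fpair_add_left (P₁ P₂ Q : MvPolynomial σ ℝ) :
    fpair (P₁ + P₂) Q = fpair P₁ Q + fpair P₂ Q := by
  rw [fpair_eq_sum (s := P₁.support ∪ P₂.support) MvPolynomial.support_add,
    fpair_eq_sum (s := P₁.support ∪ P₂.support) Finset.subset_union_left,
    fpair_eq_sum (s := P₁.support ∪ P₂.support) Finset.subset_union_right,
    ← Finset.sum_add_distrib]
  apply Finset.sum_congr rfl
  intro d _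
  rw [coeff_add]; ring

lemma fpair_sum_left {ι : Type*} (t : Finset ι) (P : ι → MvPolynomial σ ℝ) (Q : MvPolynomial σ ℝ) :
    fpair (∑ i ∈ t, P i) Q = ∑ i ∈ t, fpair (P i) Q := by
  induction t using Finset.cons_induction with
  | empty => simp [fpair]
  | cons a t ha ih => rw [Finset.sum_cons, Finset.sum_cons, fpair_add_left, ih]

lemma fpair_zero_right (P : MvPolynomial σ ℝ) : fpair P 0 = 0 := by
  simp [fpair]

lemma fpair_sum_right {ι : Type*} (t : Finset ι) (P : MvPolynomial σ ℝ) (Q : ι → MvPolynomial σ ℝ) :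
    fpair P (∑ i ∈ t, Q i) = ∑ i ∈ t, fpair P (Q i) := by
  unfold fpair
  rw [Finset.sum_comm]
  apply Finset.sum_congr rfl
  intro d _
  rw [← Finset.sum_congr rfl fun i _ => rfl]
  rw [MvPolynomial.coeff_sum]
  rw [Finset.mul_sum]

/-- Key adjunction: multiplication by `X i` is adjoint to `∂ᵢ`. -/
lemma fpair_X_mul (i : σ) (P Q : MvPolynomial σ ℝ) :
    fpair (X i * P) Q = fpair P (pderiv i Q) := by
  have hemb : Function.Injective (fun e : σ →₀ ℕ => e + Finsupp.single i 1) :=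
    fun a b h => by simpa using h
  have hsub : (X i * P).support ⊆ P.support.map ⟨_, hemb⟩ := by
    intro d hd
    rw [MvPolynomial.mem_support_iff, coeff_X_mul'] at hd
    have hi : i ∈ d.support := by
      by_contra h
      rw [if_neg h] at hd; exact hd rfl
    rw [if_pos hi] at hd
    rw [Finset.mem_map]
    refine ⟨d - Finsupp.single i 1, MvPolynomial.mem_support_iff.2 hd, ?_⟩
    simp only [Function.Embedding.coeFn_mk]
    rw [tsub_add_cancel_of_le]
    intro j
    rcases eq_or_ne j i with rfl | hne
    · simpa [Nat.one_le_iff_ne_zero] using Finsupp.mem_support_iff.1 hi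
    · simp [Finsupp.single_apply, Ne.symm hne]
  rw [fpair_eq_sum hsub, Finset.sum_map]
  unfold fpair
  apply Finset.sum_congr rfl
  intro e _
  simp only [Function.Embedding.coeFn_mk]
  have h1 : coeff (e + Finsupp.single i 1) (X i * P) = coeff e P := by
    rw [add_comm, coeff_X_mul]
  rw [h1, fact_add_single, coeff_pderiv]
  ring

lemma fpair_r2_mul (P Q : MvPolynomial σ ℝ) :
    fpair ((r2 : MvPolynomial σ ℝ) * P) Q = fpair P (lap Q) := by
  have h : (r2 : MvPolynomial σ ℝ) * P = ∑ i : σ, X i * (X i * P) := by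
    rw [r2, Finset.sum_mul]
    apply Finset.sum_congr rfl
    intro i _; ring
  rw [h, fpair_sum_left, lap, fpair_sum_right]
  apply Finset.sum_congr rfl
  intro i _
  rw [fpair_X_mul, fpair_X_mul]

lemma fpair_self_pos {P : MvPolynomial σ ℝ} (hP : P ≠ 0) : 0 < fpair P P := by
  unfold fpair
  apply Finset.sum_pos
  · intro d hd
    rw [MvPolynomial.mem_support_iff] at hd
    rw [mul_assoc]
    exact mul_pos (fact_pos d) (mul_self_pos.2 hd)
  · rwa [Finset.nonempty_iff_ne_empty, Ne, MvPolynomial.support_eq_empty]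


lemma isHomogeneous_of_coeff {φ : MvPolynomial σ ℝ} {n : ℕ}
    (h : ∀ u : σ →₀ ℕ, coeff u φ ≠ 0 → u.degree = n) : φ.IsHomogeneous n := by
  intro d hd
  rw [show (Finsupp.weight 1 : (σ →₀ ℕ) →+ ℕ) = Finsupp.weight (fun _ => 1) from rfl, ← Finsupp.degree_eq_weight_one]
  exact h d hd

lemma degree_add_single (u : σ →₀ ℕ) (i : σ) :
    (u + Finsupp.single i 1).degree = u.degree + 1 := by
  rw [Finsupp.degree_eq_weight_one]
  rw [map_add]
  simp [Finsupp.weight_apply, Finsupp.sum_single_index]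

lemma pderiv_isHomogeneous {φ : MvPolynomial σ ℝ} {n : ℕ} (h : φ.IsHomogeneous n) (i : σ) :
    (pderiv i φ).IsHomogeneous (n - 1) := by
  apply isHomogeneous_of_coeff
  intro u hu
  rw [coeff_pderiv] at hu
  have h2 : coeff (u + Finsupp.single i 1) φ ≠ 0 := by
    intro h0; rw [h0, mul_zero] at hu; exact hu rfl
  have h3 := h.coeff_eq_zero (d := u + Finsupp.single i 1)
  have h4 : (u + Finsupp.single i 1).degree = n := by
    by_contra hne; exact h2 (h3 hne)
  rw [degree_add_single] at h4
  omega

lemma pderiv_eq_zero_of_isHomogeneous_zero {φ : MvPolynomial σ ℝ} (h : φ.IsHomogeneous 0)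
    (i : σ) : pderiv i φ = 0 := by
  apply MvPolynomial.eq_zero_iff.2
  intro d
  rw [coeff_pderiv]
  have : (d + Finsupp.single i 1).degree ≠ 0 := by
    rw [degree_add_single]; omega
  rw [h.coeff_eq_zero this, mul_zero]

lemma lap_isHomogeneous {φ : MvPolynomial σ ℝ} {n : ℕ} (h : φ.IsHomogeneous n) :
    (lap φ).IsHomogeneous (n - 2) := by
  apply MvPolynomial.IsHomogeneous.sum
  intro i _
  have h2 := pderiv_isHomogeneous (pderiv_isHomogeneous h i) i
  rwa [Nat.sub_sub] at h2

lemma lap_eq_zero_of_le_one {φ : MvPolynomial σ ℝ} {n : ℕ} (h : φ.IsHomogeneous n)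
    (hn : n ≤ 1) : lap φ = 0 := by
  unfold lap
  apply Finset.sum_eq_zero
  intro i _
  interval_cases n
  · rw [pderiv_eq_zero_of_isHomogeneous_zero h i, map_zero]
  · rw [pderiv_eq_zero_of_isHomogeneous_zero (by simpa using pderiv_isHomogeneous h i) i]

lemma lap_sub (P Q : MvPolynomial σ ℝ) : lap (P - Q) = lap P - lap Q := by
  unfold lap
  rw [← Finset.sum_sub_distrib]
  apply Finset.sum_congr rfl
  intro i _
  rw [map_sub, map_sub]

lemma r2_isHomogeneous : (r2 : MvPolynomial σ ℝ).IsHomogeneous 2 := by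
  apply MvPolynomial.IsHomogeneous.sum
  intro i _
  exact (isHomogeneous_X ℝ i).mul (isHomogeneous_X ℝ i)

lemma r2_ne_zero [Nonempty σ] : (r2 : MvPolynomial σ ℝ) ≠ 0 := by
  obtain ⟨i₀⟩ := ‹Nonempty σ›
  intro h
  have h2 : coeff (Finsupp.single i₀ 2) (r2 : MvPolynomial σ ℝ) = 1 := by
    unfold r2
    rw [MvPolynomial.coeff_sum]
    have hXX : ∀ i : σ, (X i * X i : MvPolynomial σ ℝ) = X i ^ 2 := fun i => (sq (X i)).symm
    simp only [hXX, coeff_single_X_pow]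
    simp
  rw [h] at h2
  simp at h2

instance homogeneousSubmodule_finiteDimensional (d : ℕ) :
    FiniteDimensional ℝ (homogeneousSubmodule σ ℝ d) := by
  apply Submodule.finiteDimensional_of_le (S₂ := restrictTotalDegree σ ℝ d)
  intro p hp
  rw [mem_restrictTotalDegree]
  exact MvPolynomial.IsHomogeneous.totalDegree_le hp


def lapL : MvPolynomial σ ℝ →ₗ[ℝ] MvPolynomial σ ℝ :=
  ∑ i : σ, ((pderiv i : Derivation ℝ (MvPolynomial σ ℝ) (MvPolynomial σ ℝ)).toLinearMap).comp
    (pderiv i).toLinearMap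

lemma lapL_apply (P : MvPolynomial σ ℝ) : lapL P = lap P := by
  simp [lapL, lap, LinearMap.sum_apply]

lemma exists_lap_r2_eq [Nonempty σ] (e : ℕ) (Q : MvPolynomial σ ℝ)
    (hQ : Q.IsHomogeneous (e + 2)) :
    ∃ x : MvPolynomial σ ℝ, x.IsHomogeneous e ∧ lap ((r2 : MvPolynomial σ ℝ) * x) = lap Q := by
  have hmaps : ∀ p ∈ homogeneousSubmodule σ ℝ e,
      (lapL.comp (LinearMap.mulLeft ℝ (r2 : MvPolynomial σ ℝ))) p
        ∈ homogeneousSubmodule σ ℝ e := by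
    intro p hp
    rw [mem_homogeneousSubmodule] at hp ⊢
    have h1 : ((r2 : MvPolynomial σ ℝ) * p).IsHomogeneous (2 + e) := r2_isHomogeneous.mul hp
    have h2 := lap_isHomogeneous h1
    simp only [LinearMap.comp_apply, LinearMap.mulLeft_apply, lapL_apply]
    rwa [show 2 + e - 2 = e by omega] at h2
  set M := (lapL.comp (LinearMap.mulLeft ℝ (r2 : MvPolynomial σ ℝ))).restrict hmaps with hM
  have hMval : ∀ x : homogeneousSubmodule σ ℝ e,
      (M x : MvPolynomial σ ℝ) = lap ((r2 : MvPolynomial σ ℝ) * (x : MvPolynomial σ ℝ)) := by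
    intro x
    simp [hM, LinearMap.restrict_apply, lapL_apply]
  have hinj : Function.Injective M := by
    rw [← LinearMap.ker_eq_bot]
    rw [LinearMap.ker_eq_bot']
    intro x hx
    have h0 : lap ((r2 : MvPolynomial σ ℝ) * (x : MvPolynomial σ ℝ)) = 0 := by
      rw [← hMval x, hx, Submodule.coe_zero]
    have hfp : fpair ((r2 : MvPolynomial σ ℝ) * (x : MvPolynomial σ ℝ))
        ((r2 : MvPolynomial σ ℝ) * (x : MvPolynomial σ ℝ)) = 0 := by
      rw [fpair_r2_mul, h0, fpair_zero_right]
    have hr2x : (r2 : MvPolynomial σ ℝ) * (x : MvPolynomial σ ℝ) = 0 := by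
      by_contra hne
      exact absurd hfp (ne_of_gt (fpair_self_pos hne))
    rcases mul_eq_zero.1 hr2x with h | h
    · exact absurd h r2_ne_zero
    · exact Subtype.ext h
  have hsurj := LinearMap.injective_iff_surjective.1 hinj
  have hQmem : lap Q ∈ homogeneousSubmodule σ ℝ e := by
    rw [mem_homogeneousSubmodule]
    have := lap_isHomogeneous hQ
    rwa [show e + 2 - 2 = e by omega] at this
  obtain ⟨x, hx⟩ := hsurj ⟨lap Q, hQmem⟩
  refine ⟨(x : MvPolynomial σ ℝ), x.2, ?_⟩
  rw [← hMval x, hx]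

theorem decomp [Nonempty σ] (d : ℕ) (P : MvPolynomial σ ℝ) (hP : P.IsHomogeneous d) :
    ∃ h : ℕ → MvPolynomial σ ℝ, (∀ k, lap (h k) = 0) ∧
      (∀ k, h k = 0 ∨ ((h k).IsHomogeneous k ∧ k ≤ d ∧ k % 2 = d % 2)) ∧
      P = ∑ k ∈ Finset.range (d + 1), (r2 : MvPolynomial σ ℝ) ^ ((d - k) / 2) * h k := by
  induction d using Nat.strong_induction_on generalizing P with
  | _ d ih =>
  by_cases hd : d ≤ 1
  · refine ⟨fun k => if k = d then P else 0, ?_, ?_, ?_⟩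
    · intro k
      beta_reduce
      by_cases hk : k = d
      · rw [if_pos hk]; exact lap_eq_zero_of_le_one hP hd
      · rw [if_neg hk]; unfold lap; simp
    · intro k
      beta_reduce
      by_cases hk : k = d
      · subst hk; right; rw [if_pos rfl]; exact ⟨hP, le_rfl, rfl⟩
      · left; rw [if_neg hk]
    · beta_reduce
      rw [Finset.sum_eq_single_of_mem d (Finset.mem_range.2 (by omega))]
      · beta_reduce
        rw [if_pos rfl, Nat.sub_self]; norm_num
      · intro k _ hk
        beta_reduce
        rw [if_neg hk, mul_zero]
  · obtain ⟨e, rfl⟩ : ∃ e, d = e + 2 := ⟨d - 2, by omega⟩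
    obtain ⟨x, hx, hlx⟩ := exists_lap_r2_eq e P hP
    set g := P - (r2 : MvPolynomial σ ℝ) * x with hgdef
    have hg : lap g = 0 := by rw [hgdef, lap_sub, hlx, sub_self]
    have hghom : g.IsHomogeneous (e + 2) := by
      apply hP.sub
      have := r2_isHomogeneous.mul hx
      rwa [show 2 + e = e + 2 by omega] at this
    obtain ⟨h', H1, H2, H3⟩ := ih e (by omega) x hx
    refine ⟨fun k => if k = e + 2 then g else if k ≤ e then h' k else 0, ?_, ?_, ?_⟩
    · intro k
      beta_reduce
      by_cases hk : k = e + 2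
      · rw [if_pos hk]; exact hg
      · rw [if_neg hk]
        by_cases hk2 : k ≤ e
        · rw [if_pos hk2]; exact H1 k
        · rw [if_neg hk2]; unfold lap; simp
    · intro k
      beta_reduce
      by_cases hk : k = e + 2
      · subst hk; right; rw [if_pos rfl]; exact ⟨hghom, le_rfl, rfl⟩
      · by_cases hk2 : k ≤ e
        · rcases H2 k with h0 | ⟨hh1, hh2, hh3⟩
          · left; rw [if_neg hk, if_pos hk2, h0]
          · right; rw [if_neg hk, if_pos hk2]
            exact ⟨hh1, by omega, by omega⟩
        · left; rw [if_neg hk, if_neg hk2]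
    · beta_reduce
      rw [show e + 2 + 1 = (e + 1) + 1 + 1 by rfl, Finset.sum_range_succ, Finset.sum_range_succ]
      have hlast : (if e + 2 = e + 2 then g else if e + 2 ≤ e then h' (e + 2) else 0) = g :=
        if_pos rfl
      have hmid : (if e + 1 = e + 2 then g else if e + 1 ≤ e then h' (e + 1) else 0) = 0 := by
        rw [if_neg (by omega), if_neg (by omega)]
      rw [hlast, hmid, mul_zero, add_zero]
      have hsum : ∑ k ∈ Finset.range (e + 1),
          (r2 : MvPolynomial σ ℝ) ^ ((e + 2 - k) / 2) *
            (if k = e + 2 then g else if k ≤ e then h' k else 0)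
          = (r2 : MvPolynomial σ ℝ) * x := by
        rw [H3, Finset.mul_sum]
        apply Finset.sum_congr rfl
        intro k hk
        rw [Finset.mem_range] at hk
        rw [if_neg (by omega), if_pos (by omega)]
        rw [show (e + 2 - k) / 2 = (e - k) / 2 + 1 by omega, pow_succ]
        ring
      rw [hsum, Nat.sub_self, pow_zero, one_mul, hgdef]
      ring


section Subst

variable {τ : Type*} [Fintype τ] [DecidableEq τ]

/-- Linear substitution polynomials. -/
def lin (c : σ → τ → ℝ) (i : σ) : MvPolynomial τ ℝ := ∑ j : τ, C (c i j) * X j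

lemma lin_isHomogeneous (c : σ → τ → ℝ) (i : σ) : (lin c i).IsHomogeneous 1 :=
  MvPolynomial.IsHomogeneous.sum _ _ _ fun j _ => isHomogeneous_C_mul_X _ _

lemma aeval_lin_isHomogeneous (c : σ → τ → ℝ) {Q : MvPolynomial σ ℝ} {k : ℕ}
    (hQ : Q.IsHomogeneous k) : (aeval (lin c) Q).IsHomogeneous k := by
  have := hQ.aeval (lin c) (n := 1) (fun i => lin_isHomogeneous c i)
  rwa [one_mul] at this

lemma pderiv_lin (c : σ → τ → ℝ) (s : σ) (j : τ) :
    pderiv j (lin c s) = C (c s j) := by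
  unfold lin
  rw [map_sum]
  rw [Finset.sum_congr rfl fun t _ => by rw [pderiv_C_mul]]
  rw [Finset.sum_eq_single_of_mem j (Finset.mem_univ j)]
  · rw [pderiv_X_self, mul_one]
  · intro t _ ht
    rw [pderiv_X_of_ne ht, mul_zero]

lemma pderiv_aeval_lin (c : σ → τ → ℝ) (j : τ) (Q : MvPolynomial σ ℝ) :
    pderiv j (aeval (lin c) Q) = ∑ k : σ, C (c k j) * aeval (lin c) (pderiv k Q) := by
  induction Q using MvPolynomial.induction_on with
  | C a => simp
  | add p q hp hq =>
    rw [map_add, map_add, hp, hq, ← Finset.sum_add_distrib]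
    apply Finset.sum_congr rfl
    intro k _
    rw [map_add, map_add, mul_add]
  | mul_X p s hp =>
    rw [map_mul, aeval_X, pderiv_mul, hp, pderiv_lin]
    have hrhs : ∀ k : σ, C (c k j) * aeval (lin c) (pderiv k (p * X s))
        = C (c k j) * aeval (lin c) (pderiv k p) * lin c s
          + (if s = k then C (c k j) * aeval (lin c) p else 0) := by
      intro k
      rw [pderiv_mul]
      rcases eq_or_ne s k with rfl | hne
      · rw [pderiv_X_self, if_pos rfl, mul_one, map_add, map_mul, aeval_X]
        ring
      · rw [pderiv_X_of_ne hne, if_neg hne, mul_zero, map_add, map_mul, aeval_X, map_zero]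
        ring
    rw [Finset.sum_congr rfl fun k _ => hrhs k, Finset.sum_add_distrib,
      Finset.sum_ite_eq Finset.univ s (fun k => C (c k j) * aeval (lin c) p),
      if_pos (Finset.mem_univ s), ← Finset.sum_mul]
    ring

lemma lap_aeval_lin (c : σ → τ → ℝ)
    (horth : ∀ k l : σ, ∑ j : τ, c k j * c l j = if k = l then 1 else 0)
    (Q : MvPolynomial σ ℝ) :
    lap (aeval (lin c) Q) = aeval (lin c) (lap Q) := by
  unfold lap
  have step : ∀ j : τ, pderiv j (pderiv j (aeval (lin c) Q))
      = ∑ k : σ, ∑ l : σ, C (c k j * c l j) * aeval (lin c) (pderiv l (pderiv k Q)) := by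
    intro j
    rw [pderiv_aeval_lin, map_sum]
    apply Finset.sum_congr rfl
    intro k _
    rw [pderiv_C_mul, pderiv_aeval_lin, Finset.mul_sum]
    apply Finset.sum_congr rfl
    intro l _
    rw [map_mul]
    ring
  rw [Finset.sum_congr rfl fun j _ => step j]
  rw [Finset.sum_comm]
  have inner : ∀ k : σ, ∑ j : τ, ∑ l : σ, C (c k j * c l j) * aeval (lin c)
      (pderiv l (pderiv k Q)) = aeval (lin c) (pderiv k (pderiv k Q)) := by
    intro k
    rw [Finset.sum_comm]
    have collect : ∀ l : σ, ∑ j : τ, C (c k j * c l j) * aeval (lin c) (pderiv l (pderiv k Q))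
        = if k = l then aeval (lin c) (pderiv l (pderiv k Q)) else 0 := by
      intro l
      rw [← Finset.sum_mul, ← map_sum, horth k l]
      split <;> simp
    rw [Finset.sum_congr rfl fun l _ => collect l]
    rw [Finset.sum_ite_eq Finset.univ k (fun l => aeval (lin c) (pderiv l (pderiv k Q)))]
    rw [if_pos (Finset.mem_univ k)]
  rw [Finset.sum_congr rfl fun k _ => inner k, ← map_sum]

lemma eval_aeval_lin (c : σ → τ → ℝ) (x : τ → ℝ) (Q : MvPolynomial σ ℝ) :
    eval x (aeval (lin c) Q) = eval (fun i => ∑ j : τ, c i j * x j) Q := by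
  rw [MvPolynomial.aeval_def, MvPolynomial.eval_eval₂]
  have hC : (eval x).comp (algebraMap ℝ (MvPolynomial τ ℝ)) = RingHom.id ℝ := by
    ext r
    simp [MvPolynomial.algebraMap_eq]
  rw [hC]
  have hg : (fun s => eval x (lin c s)) = fun i => ∑ j : τ, c i j * x j := by
    funext s
    unfold lin
    rw [map_sum]
    apply Finset.sum_congr rfl
    intro j _
    rw [eval_mul, eval_C, eval_X]
  rw [hg, eval₂_id]

end Subst

end XA

end XAsec

open MvPolynomial in
/-- Main theorem. -/
theorem xray_stmt2 {n m : ℕ} (P : MvPolynomial (Fin n) ℝ) (hP : Harm P)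
    (hhom : P.IsHomogeneous m) (H : Submodule ℝ (E n)) (hH : Module.finrank ℝ H = n - 1) :
    ∃ R : ℕ → MvPolynomial (Fin n) ℝ,
      (∀ k, Harm (R k)) ∧
      (∀ k, R k = 0 ∨ ((R k).IsHomogeneous k ∧ k ≤ m ∧ k % 2 = m % 2)) ∧
      (∀ k, ∀ v : E n, ∀ u ∈ Hᗮ, evalP (R k) (v + u) = evalP (R k) v) ∧
      (∀ v ∈ Metric.sphere (0 : E n) 1, v ∈ H →
        evalP P v = ∑ k ∈ Finset.range (m + 1), evalP (R k) v) := by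
  classical
  by_cases hn : n ≤ 1
  · refine ⟨fun _ => 0, ?_, ?_, ?_, ?_⟩
    · intro k; unfold Harm; simp
    · intro k; left; rfl
    · intro k v u hu; rfl
    · intro v hv hvH
      exfalso
      have h0 : Module.finrank ℝ H = 0 := by omega
      have hH0 : H = ⊥ := Submodule.finrank_eq_zero.mp h0
      rw [hH0, Submodule.mem_bot] at hvH
      subst hvH
      rw [mem_sphere_zero_iff_norm] at hv
      simp at hv
  · obtain ⟨N, rfl⟩ : ∃ N, n = N + 1 := ⟨n - 1, by omega⟩
    have hNpos : 0 < N := by omega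
    haveI : Nonempty (Fin N) := ⟨⟨0, hNpos⟩⟩
    have hHrank : Module.finrank ℝ H = N := by simpa using hH
    let bH : OrthonormalBasis (Fin N) ℝ H :=
      (stdOrthonormalBasis ℝ H).reindex (finCongr hHrank)
    set c : Fin N → Fin (N + 1) → ℝ := fun i j => (bH i : E (N + 1)) j with hc
    set c' : Fin (N + 1) → Fin N → ℝ := fun j i => c i j with hc'
    have hip : ∀ x y : E (N + 1), ⟪x, y⟫ = ∑ j : Fin (N + 1), x j * y j := by
      intro x y
      rw [PiLp.inner_apply]
      apply Finset.sum_congr rfl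
      intro j _
      rw [RCLike.inner_apply, starRingEnd_apply, star_trivial]
      ring
    have horth : ∀ k l : Fin N, ∑ j : Fin (N + 1), c k j * c l j = if k = l then 1 else 0 := by
      intro k l
      rw [← hip]
      have h1 := orthonormal_iff_ite.mp bH.orthonormal k l
      rw [Submodule.coe_inner] at h1
      rw [h1]
    set Q := aeval (XA.lin c') P with hQdef
    have hQhom : Q.IsHomogeneous m := XA.aeval_lin_isHomogeneous c' hhom
    obtain ⟨h, hlap, hcond, hsum⟩ := XA.decomp m Q hQhom
    refine ⟨fun k => aeval (XA.lin c) (h k), ?_, ?_, ?_, ?_⟩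
    · intro k
      show XA.lap (aeval (XA.lin c) (h k)) = 0
      rw [XA.lap_aeval_lin c horth, hlap k, map_zero]
    · intro k
      rcases hcond k with h0 | ⟨hh1, hh2, hh3⟩
      · left; show aeval (XA.lin c) (h k) = 0; rw [h0, map_zero]
      · right; exact ⟨XA.aeval_lin_isHomogeneous c hh1, hh2, hh3⟩
    · intro k v u hu
      show evalP (aeval (XA.lin c) (h k)) (v + u) = evalP (aeval (XA.lin c) (h k)) v
      unfold evalP
      rw [XA.eval_aeval_lin, XA.eval_aeval_lin]
      have hzero : ∀ i : Fin N, ∑ j : Fin (N + 1), c i j * u j = 0 := by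
        intro i
        rw [← hip ((bH i : E (N + 1))) u]
        exact (Submodule.mem_orthogonal H u).mp hu _ (bH i).2
      have hfun : (fun i : Fin N => ∑ j : Fin (N + 1), c i j * (v + u) j)
          = fun i : Fin N => ∑ j : Fin (N + 1), c i j * v j := by
        funext i
        calc ∑ j : Fin (N + 1), c i j * (v + u) j
            = ∑ j : Fin (N + 1), (c i j * v j + c i j * u j) := by
              apply Finset.sum_congr rfl; intro j _
              have : (v + u) j = v j + u j := rfl
              rw [this]; ring
          _ = ∑ j : Fin (N + 1), c i j * v j := by
              rw [Finset.sum_add_distrib, hzero i, add_zero]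
      rw [hfun]
    · intro v hv hvH
      set vH : H := ⟨v, hvH⟩ with hvHdef
      set x : Fin N → ℝ := fun i => bH.repr vH i with hx
      have hxi : ∀ i : Fin N, x i = ∑ j : Fin (N + 1), c i j * v j := by
        intro i
        show bH.repr vH i = _
        rw [bH.repr_apply_apply vH i, Submodule.coe_inner, hip]
      have hsum_apply : ∀ (f : Fin N → E (N + 1)) (j : Fin (N + 1)),
          (∑ i : Fin N, f i) j = ∑ i : Fin N, f i j := by
        intro f j
        rw [WithLp.ofLp_sum]
        exact Finset.sum_apply j Finset.univ _
      have hcoe : v = ∑ i : Fin N, x i • ((bH i : E (N + 1))) := by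
        conv_lhs => rw [show v = (vH : E (N + 1)) from rfl, ← bH.sum_repr vH]
        push_cast
        rfl
      have hvj : ∀ j : Fin (N + 1), v j = ∑ i : Fin N, c' j i * x i := by
        intro j
        conv_lhs => rw [hcoe]
        rw [hsum_apply]
        apply Finset.sum_congr rfl
        intro i _
        exact mul_comm (x i) (c i j)
      have hnorm : ∑ i : Fin N, x i * x i = 1 := by
        have h1 : ‖v‖ = 1 := mem_sphere_zero_iff_norm.mp hv
        have h2 : ‖vH‖ = 1 := h1
        have h3 : ‖bH.repr vH‖ = 1 := by rw [LinearIsometryEquiv.norm_map]; exact h2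
        have h4 := EuclideanSpace.norm_eq (bH.repr vH)
        rw [h3] at h4
        have h5 : ∑ i : Fin N, ‖bH.repr vH i‖ ^ 2 = 1 := by
          have h6 := congrArg (fun t => t ^ 2) h4.symm
          simpa [Real.sq_sqrt (Finset.sum_nonneg fun i _ => sq_nonneg _)] using h6
        rw [← h5]
        apply Finset.sum_congr rfl
        intro i _
        rw [Real.norm_eq_abs, sq_abs]
        exact (sq (bH.repr vH i)).symm
      have hPv : evalP P v = eval x Q := by
        rw [hQdef]
        unfold evalP
        rw [XA.eval_aeval_lin c' x P]
        rw [show (fun j : Fin (N + 1) => v j) = (fun j => ∑ i : Fin N, c' j i * x i) from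
          funext hvj]
      rw [hPv, hsum, map_sum]
      apply Finset.sum_congr rfl
      intro k _
      rw [eval_mul, map_pow]
      have hr2 : eval x (XA.r2 : MvPolynomial (Fin N) ℝ) = 1 := by
        unfold XA.r2
        rw [map_sum, ← hnorm]
        apply Finset.sum_congr rfl
        intro i _
        rw [eval_mul, eval_X]
      rw [hr2, one_pow, one_mul]
      show _ = evalP (aeval (XA.lin c) (h k)) v
      unfold evalP
      rw [XA.eval_aeval_lin c (fun j => v j) (h k)]
      rw [show (fun i : Fin N => ∑ j : Fin (N + 1), c i j * v j) = x from
        funext fun i => (hxi i).symm]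
end
end

section
/- Let E be a Euclidean space of dimension n ≥ 3 and W a smooth function on S^{n-1}. If W is invariant under the isotropy subgroup G_v ⊂ SO(n) of every vector v ∈ E \ {0} up to spherical harmonics of degree ≤ m-1 (i.e., for every v and every γ ∈ G_v, γ*W - W is a sum of spherical harmonics of degree ≤ m-1) and moreover for each v one can write W = q_v + S_v with q_v of degree ≤ m-1 and γ*S_v = S_v for all γ ∈ G_v, then W is a sum of spherical harmonics of degree ≤ m-1. -/
open scoped RealInnerProductSpace

noncomputable section

/-- `γ` belongs to `SO(n)` viewed as the group of linear isometries with determinant one,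
and fixes the vector `v` (i.e. `γ` is in the isotropy subgroup `G_v`). -/
def InIsotropy {n : ℕ} (v : E n) (γ : E n ≃ₗᵢ[ℝ] E n) : Prop :=
  LinearMap.det (γ.toLinearEquiv.toLinearMap) = 1 ∧ γ v = v

/-! For `n ≥ 3` the isotropy group `G_v` acts transitively on each slice `⟪x, v⟫ = c` of the
sphere, so a `G_v`-invariant function on the sphere depends only on `⟪x, v⟫`. With `v = e₀` and
`v = e₁`, the difference `S_{e₀} - S_{e₁} = q_{e₁} - q_{e₀}` is a polynomial `P` of degree `≤ d`,
while `S_{e₀}(x) = f(x₀)` and `S_{e₁}(x) = g(x₁)`. At the two points `x₀ e₀ ± √(1 - x₀²) e₂`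
this gives `f(x₀) = P + g(0)`; averaging them keeps only the even part of `P` in `x₂`, a
polynomial in `x₀` and `x₂² = 1 - x₀²`. Hence `S_{e₀}`, and with it `W = q_{e₀} + S_{e₀}`, is of
degree `≤ d` on the sphere. -/

open Submodule in
lemma det_reflection_orthogonal_singleton {F : Type*} [NormedAddCommGroup F]
    [InnerProductSpace ℝ F] [FiniteDimensional ℝ F] {u : F} (hu : u ≠ 0) :
    LinearMap.det (reflection (ℝ ∙ u)ᗮ).toLinearMap = -1 := by
  rw [det_reflection, orthogonal_orthogonal, finrank_span_singleton hu, pow_one]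

lemma exists_orthogonal_pair_ne_zero {F : Type*} [NormedAddCommGroup F]
    [InnerProductSpace ℝ F] [FiniteDimensional ℝ F] (hF : 2 < Module.finrank ℝ F) (u v : F) :
    ∃ w ≠ 0, ⟪w, u⟫ = 0 ∧ ⟪w, v⟫ = 0 := by
  classical
  set K := Submodule.span ℝ (({u, v} : Finset F) : Set F)
  have hK : Module.finrank ℝ K ≤ 2 := (finrank_span_finset_le_card _).trans Finset.card_le_two
  have hKperp : Kᗮ ≠ ⊥ := by
    intro h
    have := K.finrank_add_finrank_orthogonal
    rw [h, finrank_bot] at this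
    omega
  obtain ⟨w, hw, hw0⟩ := Submodule.exists_mem_ne_zero_of_ne_bot hKperp
  refine ⟨w, hw0, ?_, ?_⟩
  · exact Submodule.inner_left_of_mem_orthogonal (Submodule.subset_span (by simp)) hw
  · exact Submodule.inner_left_of_mem_orthogonal (Submodule.subset_span (by simp)) hw

/-- Reflecting in `(a - b)ᗮ` sends `a` to `b` and fixes `v`; composing with the reflection in
`wᗮ`, which fixes `v` and `b`, brings the determinant back to `1`. -/
lemma exists_inIsotropy_apply_eq {n : ℕ} {v a b w : E n} (hab : ‖a‖ = ‖b‖)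
    (hv : ⟪a - b, v⟫ = 0) (hw : w ≠ 0) (hwv : ⟪w, v⟫ = 0) (hwb : ⟪w, b⟫ = 0) :
    ∃ γ : E n ≃ₗᵢ[ℝ] E n, InIsotropy v γ ∧ γ a = b := by
  obtain rfl | hne := eq_or_ne a b
  · exact ⟨LinearIsometryEquiv.refl ℝ (E n), ⟨LinearMap.det_id, rfl⟩, rfl⟩
  set R₁ := Submodule.reflection (ℝ ∙ (a - b))ᗮ
  set R₂ := Submodule.reflection (ℝ ∙ w)ᗮ
  have hR₁v : R₁ v = v := Submodule.reflection_mem_subspace_eq_self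
    (Submodule.mem_orthogonal_singleton_iff_inner_right.2 hv)
  have hR₂ : ∀ {x}, ⟪w, x⟫ = 0 → R₂ x = x := fun hx =>
    Submodule.reflection_mem_subspace_eq_self
      (Submodule.mem_orthogonal_singleton_iff_inner_right.2 hx)
  refine ⟨R₁.trans R₂, ⟨?_, ?_⟩, ?_⟩
  · change LinearMap.det (R₂.toLinearMap ∘ₗ R₁.toLinearMap) = 1
    rw [LinearMap.det_comp, det_reflection_orthogonal_singleton hw,
      det_reflection_orthogonal_singleton (sub_ne_zero_of_ne hne)]
    norm_num
  · simp [hR₁v, hR₂ hwv]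
  · have hR₁a : R₁ a = b := Submodule.reflection_sub hab
    simp [hR₁a, hR₂ hwb]

lemma eq_of_inIsotropy_invariant {n : ℕ} (hn : 3 ≤ n) {v : E n} {S : E n → ℝ}
    (hS : ∀ γ : E n ≃ₗᵢ[ℝ] E n, InIsotropy v γ → ∀ x ∈ sphereS n, S (γ x) = S x)
    {x y : E n} (hx : x ∈ sphereS n) (hy : y ∈ sphereS n) (hxy : ⟪x, v⟫ = ⟪y, v⟫) :
    S x = S y := by
  obtain ⟨w, hw, hwv, hwy⟩ :=
    exists_orthogonal_pair_ne_zero (by rw [finrank_euclideanSpace_fin]; omega) v y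
  have hxy' : ‖x‖ = ‖y‖ := by simp_all [sphereS]
  obtain ⟨γ, hγ, rfl⟩ :=
    exists_inIsotropy_apply_eq hxy' (by rw [inner_sub_left, hxy, sub_self]) hw hwv hwy
  exact (hS γ hγ x hx).symm

open MvPolynomial

open Classical in
/-- Restrict `P` to the plane spanned by `e i, e k`, keep its even part in `x k`, and substitute
`1 - x i ^ 2` for `x k ^ 2`: on the sphere this is the average of `P` over the two points with
given `i`-th coordinate in that plane. -/
def evenSlice {n : ℕ} (P : MvPolynomial (Fin n) ℝ) (i k : Fin n) : MvPolynomial (Fin n) ℝ :=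
  ∑ a ∈ P.support with (∀ j, j ≠ i → j ≠ k → a j = 0) ∧ Even (a k),
    C (P.coeff a) * X i ^ a i * (1 - X i ^ 2) ^ (a k / 2)

lemma totalDegree_evenSlice_le {n : ℕ} (P : MvPolynomial (Fin n) ℝ) {i k : Fin n}
    (hik : i ≠ k) : (evenSlice P i k).totalDegree ≤ P.totalDegree := by
  refine (totalDegree_finsetSum _ _).trans (Finset.sup_le fun a ha => ?_)
  obtain ⟨ha, -, hak⟩ := Finset.mem_filter.1 ha
  have h1 : (1 - X i ^ 2 : MvPolynomial (Fin n) ℝ).totalDegree ≤ 2 :=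
    (totalDegree_sub _ _).trans (max_le (by simp) (totalDegree_X_pow _ _).le)
  calc (C (P.coeff a) * X i ^ a i * (1 - X i ^ 2) ^ (a k / 2)).totalDegree
      ≤ 0 + a i + a k / 2 * 2 := by
        refine (totalDegree_mul _ _).trans (add_le_add ((totalDegree_mul _ _).trans
          (add_le_add (totalDegree_C _).le (totalDegree_X_pow _ _).le)) ?_)
        exact (totalDegree_pow _ _).trans (Nat.mul_le_mul_left _ h1)
    _ ≤ ∑ j ∈ {i, k}, a j := by rw [Finset.sum_pair hik]; omega
    _ ≤ a.sum fun _ e => e := by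
        rw [Finsupp.sum_fintype _ _ fun _ => rfl]
        exact Finset.sum_le_sum_of_subset (Finset.subset_univ _)
    _ ≤ P.totalDegree := le_totalDegree ha

open Classical in
lemma prod_single_add_single_pow {n : ℕ} {i k : Fin n} (hik : i ≠ k) (t c : ℝ)
    (a : Fin n →₀ ℕ) :
    ∏ j, (EuclideanSpace.single i t + EuclideanSpace.single k c : E n) j ^ a j =
      if ∀ j, j ≠ i → j ≠ k → a j = 0 then t ^ a i * c ^ a k else 0 := by
  split_ifs with ha
  · rw [Fintype.prod_eq_mul i k hik fun j hj => by simp [ha j hj.1 hj.2]]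
    simp [hik, hik.symm]
  · push Not at ha
    obtain ⟨j, hji, hjk, hj⟩ := ha
    exact Finset.prod_eq_zero (Finset.mem_univ j)
      (by simp [hji, hjk, zero_pow hj])

open Classical in
lemma evalP_evenSlice {n : ℕ} (P : MvPolynomial (Fin n) ℝ) (i k : Fin n) (z : E n) :
    evalP (evenSlice P i k) z = ∑ a ∈ P.support,
      if (∀ j, j ≠ i → j ≠ k → a j = 0) ∧ Even (a k) then
        P.coeff a * z i ^ a i * (1 - z i ^ 2) ^ (a k / 2) else 0 := by
  rw [evalP, evenSlice, Finset.sum_filter, map_sum]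
  refine Finset.sum_congr rfl fun a _ => ?_
  split_ifs <;> simp

lemma evalP_add_evalP_reflect {n : ℕ} (P : MvPolynomial (Fin n) ℝ) {i k : Fin n}
    (hik : i ≠ k) {t s : ℝ} (hs : s ^ 2 = 1 - t ^ 2) {z : E n} (hz : z i = t) :
    evalP P (EuclideanSpace.single i t + EuclideanSpace.single k s) +
      evalP P (EuclideanSpace.single i t + EuclideanSpace.single k (-s)) =
      2 * evalP (evenSlice P i k) z := by
  classical
  rw [evalP_evenSlice]
  simp only [evalP, eval_eq', prod_single_add_single_pow hik, hz]
  rw [← Finset.sum_add_distrib, Finset.mul_sum]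
  refine Finset.sum_congr rfl fun a _ => ?_
  by_cases ha : ∀ j, j ≠ i → j ≠ k → a j = 0
  · rw [if_pos ha, if_pos ha]
    obtain heven | hodd := Nat.even_or_odd (a k)
    · have hsk : s ^ a k = (1 - t ^ 2) ^ (a k / 2) := by
        rw [← Nat.two_mul_div_two_of_even heven, pow_mul, hs, Nat.mul_div_cancel_left _ two_pos]
      rw [if_pos ⟨ha, heven⟩, heven.neg_pow, hsk]
      ring
    · rw [if_neg fun h => Nat.not_even_iff_odd.2 hodd h.2, hodd.neg_pow]
      ring
  · rw [if_neg ha, if_neg ha, if_neg fun h => ha h.1]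
    ring

namespace IsDegLE

variable {n m : ℕ} {S : Set (E n)} {f g : E n → ℝ}

lemma congr (hf : IsDegLE m S f) (h : ∀ x ∈ S, f x = g x) : IsDegLE m S g := by
  obtain ⟨P, hPm, hP⟩ := hf
  exact ⟨P, hPm, fun x hx => (h x hx).symm.trans (hP x hx)⟩

lemma add (hf : IsDegLE m S f) (hg : IsDegLE m S g) : IsDegLE m S fun x => f x + g x := by
  obtain ⟨P, hPm, hP⟩ := hf
  obtain ⟨Q, hQm, hQ⟩ := hg
  exact ⟨P + Q, (totalDegree_add _ _).trans (max_le hPm hQm),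
    fun x hx => by simp [evalP, hP x hx, hQ x hx]⟩

lemma sub (hf : IsDegLE m S f) (hg : IsDegLE m S g) : IsDegLE m S fun x => f x - g x := by
  obtain ⟨P, hPm, hP⟩ := hf
  obtain ⟨Q, hQm, hQ⟩ := hg
  exact ⟨P - Q, (totalDegree_sub _ _).trans (max_le hPm hQm),
    fun x hx => by simp [evalP, hP x hx, hQ x hx]⟩

end IsDegLE

lemma sq_apply_le_one_of_mem_sphereS {n : ℕ} {x : E n} (hx : x ∈ sphereS n) (i : Fin n) :
    x i ^ 2 ≤ 1 := by
  have h := PiLp.norm_apply_le x i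
  rw [show ‖x‖ = 1 by simpa [sphereS] using hx, Real.norm_eq_abs] at h
  nlinarith [abs_nonneg (x i), sq_abs (x i)]

lemma single_add_single_mem_sphereS {n : ℕ} {i k : Fin n} (hik : i ≠ k) {t s : ℝ}
    (h : t ^ 2 + s ^ 2 = 1) :
    (EuclideanSpace.single i t + EuclideanSpace.single k s : E n) ∈ sphereS n := by
  rw [sphereS, mem_sphere_zero_iff_norm, EuclideanSpace.norm_eq, Real.sqrt_eq_one,
    Fintype.sum_eq_add i k hik fun j hj => by simp [hj.1, hj.2]]
  simp [hik, hik.symm, h]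

lemma isDegLE_of_sub_of_inIsotropy_invariant {n d : ℕ} (hn : 3 ≤ n) {i k : Fin n} (hik : i ≠ k)
    {S S' : E n → ℝ}
    (hS : ∀ γ, InIsotropy (EuclideanSpace.single i 1) γ → ∀ x ∈ sphereS n, S (γ x) = S x)
    (hS' : ∀ γ, InIsotropy (EuclideanSpace.single k 1) γ → ∀ x ∈ sphereS n, S' (γ x) = S' x)
    (hSS' : IsDegLE d (sphereS n) fun x => S x - S' x) : IsDegLE d (sphereS n) S := by
  obtain ⟨P, hPd, hP⟩ := hSS'
  obtain ⟨l, hli, hlk⟩ := Fin.exists_ne_and_ne_of_two_lt i k (by omega)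
  set y : ℝ → ℝ → E n := fun t s => EuclideanSpace.single i t + EuclideanSpace.single l s
  have hy_mem {t s : ℝ} (h : t ^ 2 + s ^ 2 = 1) : y t s ∈ sphereS n :=
    single_add_single_mem_sphereS hli.symm h
  have hS'y {t s : ℝ} (h : t ^ 2 + s ^ 2 = 1) : S' (y t s) = S' (y 0 1) :=
    eq_of_inIsotropy_invariant hn hS' (hy_mem h) (hy_mem (by norm_num))
      (by simp [y, EuclideanSpace.inner_single_right, hik, hlk])
  refine ⟨evenSlice P i l + C (S' (y 0 1)),
    (totalDegree_add _ _).trans (max_le ((totalDegree_evenSlice_le P hli.symm).trans hPd)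
      (by simp)), fun x hx => ?_⟩
  set s := √(1 - x i ^ 2)
  have hs : s ^ 2 = 1 - x i ^ 2 :=
    Real.sq_sqrt (by linarith [sq_apply_le_one_of_mem_sphereS hx i])
  have hSx {c : ℝ} (hc : c ^ 2 = s ^ 2) : S x = evalP P (y (x i) c) + S' (y 0 1) := by
    have h : x i ^ 2 + c ^ 2 = 1 := by linarith
    rw [← hS'y h, ← hP _ (hy_mem h), sub_add_cancel]
    exact eq_of_inIsotropy_invariant hn hS hx (hy_mem h)
      (by simp [y, EuclideanSpace.inner_single_right, hli])
  have havg := evalP_add_evalP_reflect P hli.symm hs (z := x) rfl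
  have heval : evalP (evenSlice P i l + C (S' (y 0 1))) x =
      evalP (evenSlice P i l) x + S' (y 0 1) := by simp [evalP]
  linarith [hSx (c := s) rfl, hSx (c := -s) (neg_sq s)]

theorem xray_stmt4_general {n d : ℕ} (hn : 3 ≤ n) (W : E n → ℝ)
    (h2 : ∀ v : E n, v ≠ 0 → ∃ q S : E n → ℝ,
      IsDegLE d (sphereS n) q ∧
      (∀ γ : E n ≃ₗᵢ[ℝ] E n, InIsotropy v γ → ∀ x ∈ sphereS n, S (γ x) = S x) ∧
      (∀ x ∈ sphereS n, W x = q x + S x)) :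
    IsDegLE d (sphereS n) W := by
  let i : Fin n := ⟨0, by omega⟩
  let k : Fin n := ⟨1, by omega⟩
  obtain ⟨q, S, hq, hS, hW⟩ := h2 (EuclideanSpace.single i 1) (by simp)
  obtain ⟨q', S', hq', hS', hW'⟩ := h2 (EuclideanSpace.single k 1) (by simp)
  have hSS' : IsDegLE d (sphereS n) fun x => S x - S' x :=
    (hq'.sub hq).congr fun x hx => by linarith [hW x hx, hW' x hx]
  have hS_deg := isDegLE_of_sub_of_inIsotropy_invariant hn (by simp [i, k]) hS hS' hSS'
  exact (hq.add hS_deg).congr fun x hx => (hW x hx).symm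

/-- Writing `d = m - 1`: if a smooth function `W` on `S^{n-1}` (n ≥ 3) is invariant under
the isotropy subgroup `G_v` of every `v ≠ 0` up to spherical harmonics of degree `≤ d`,
and for every `v` one can write `W = q_v + S_v` on the sphere with `q_v` of degree `≤ d`
and `S_v` invariant under `G_v`, then `W` is a sum of spherical harmonics of degree `≤ d`. -/
theorem xray_stmt4 {n d : ℕ} (hn : 3 ≤ n) (W : E n → ℝ) (hW : ContDiff ℝ (⊤ : ℕ∞) W)
    (h1 : ∀ v : E n, v ≠ 0 → ∀ γ : E n ≃ₗᵢ[ℝ] E n, InIsotropy v γ →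
      IsDegLE d (sphereS n) (fun x => W (γ x) - W x))
    (h2 : ∀ v : E n, v ≠ 0 → ∃ q S : E n → ℝ,
      IsDegLE d (sphereS n) q ∧
      (∀ γ : E n ≃ₗᵢ[ℝ] E n, InIsotropy v γ → ∀ x ∈ sphereS n, S (γ x) = S x) ∧
      (∀ x ∈ sphereS n, W x = q x + S x)) :
    IsDegLE d (sphereS n) W :=
  xray_stmt4_general hn W h2
end
end

section
/- Let E be a Euclidean space of dimension n, let m, k ≥ 0 with m ≥ k, and let f and f' be spherical harmonics on S^{n-1} of degrees m and k respectively. Then the pointwise product f·f' is a sum of spherical harmonics of degrees m+k, m+k-2, ..., m-k; that is, f·f' ∈ ⊕_{ℓ=0}^{k} Ω_{m+k-2ℓ}(E). -/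
noncomputable section

/-!
For harmonic `P, Q` with `Q` homogeneous of degree `k`, `Δ(PQ) = 2 ∑ᵢ ∂ᵢP ∂ᵢQ` is again a sum
of products of harmonic polynomials, the second factor now of degree `k - 1`; hence
`Δ^(k+1)(PQ) = 0`. A homogeneous `F` with `Δ^t F = 0` expands as `∑_{j<t} |x|^{2j} H_j` with `H_j`
harmonic homogeneous: expand `ΔF` by induction, and use that `Δ(|x|^{2j+2} H)` is a nonzero
multiple of `|x|^{2j} H` for harmonic homogeneous `H` to find `∑_j |x|^{2j+2} H'_j` with the same
Laplacian as `F`; the difference is the harmonic `H_0`. On the unit sphere `|x|² = 1`.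
-/

open Finset

namespace MvPolynomial

variable {σ R : Type*}

section CommSemiring

variable [CommSemiring R]

theorem pderiv_pderiv_comm (i j : σ) (p : MvPolynomial σ R) :
    pderiv i (pderiv j p) = pderiv j (pderiv i p) := by
  classical
  induction p using MvPolynomial.induction_on with
  | C a => simp
  | add p q hp hq => simp [hp, hq]
  | mul_X p s hp =>
      simp only [pderiv_mul, map_add, hp, pderiv_X, Pi.single_apply]
      split_ifs <;> simp; ring

theorem IsHomogeneous.pderiv_eq_zero {p : MvPolynomial σ R} (hp : p.IsHomogeneous 0) (i : σ) :
    pderiv i p = 0 := by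
  rw [← totalDegree_zero_iff_isHomogeneous, totalDegree_eq_zero_iff_eq_C] at hp
  rw [hp, pderiv_C]

theorem IsHomogeneous.smul {d : ℕ} {p : MvPolynomial σ R} (hp : p.IsHomogeneous d) (c : R) :
    (c • p).IsHomogeneous d :=
  (homogeneousSubmodule σ R d).smul_mem c hp

variable [Fintype σ]

variable (σ R) in
def laplacian : MvPolynomial σ R →ₗ[R] MvPolynomial σ R :=
  ∑ i : σ, (pderiv i).toLinearMap ∘ₗ (pderiv i).toLinearMap

theorem laplacian_apply (p : MvPolynomial σ R) :
    laplacian σ R p = ∑ i : σ, pderiv i (pderiv i p) := by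
  simp [laplacian, LinearMap.sum_apply]

theorem laplacian_pderiv (i : σ) (p : MvPolynomial σ R) :
    laplacian σ R (pderiv i p) = pderiv i (laplacian σ R p) := by
  simp only [laplacian_apply, map_sum, pderiv_pderiv_comm _ i]

theorem IsHomogeneous.laplacian {d : ℕ} {p : MvPolynomial σ R} (hp : p.IsHomogeneous d) :
    (laplacian σ R p).IsHomogeneous (d - 2) := by
  rw [laplacian_apply]
  exact IsHomogeneous.sum _ _ _ fun i _ => hp.pderiv.pderiv

theorem laplacian_eq_zero_of_isHomogeneous_of_lt_two {d : ℕ} {p : MvPolynomial σ R}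
    (hp : p.IsHomogeneous d) (hd : d < 2) : laplacian σ R p = 0 := by
  rw [laplacian_apply]
  refine sum_eq_zero fun i _ => IsHomogeneous.pderiv_eq_zero ?_ i
  simpa [show d - 1 = 0 by omega] using hp.pderiv (i := i)

theorem laplacian_mul (p q : MvPolynomial σ R) :
    laplacian σ R (p * q) = laplacian σ R p * q + p * laplacian σ R q
      + 2 * ∑ i : σ, pderiv i p * pderiv i q := by
  have h (i : σ) : pderiv i (pderiv i (p * q)) = pderiv i (pderiv i p) * q
      + p * pderiv i (pderiv i q) + 2 * (pderiv i p * pderiv i q) := by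
    simp only [pderiv_mul, map_add]
    ring
  simp only [laplacian_apply, h, sum_add_distrib, ← sum_mul, ← mul_sum]

/-- For harmonic `p, q` we have `Δ (p q) = 2 ∑ᵢ ∂ᵢp ∂ᵢq`, a sum of products of harmonic
polynomials in which the degree of the second factor has dropped by one. -/
theorem laplacian_pow_succ_mul_eq_zero {k : ℕ} {p q : MvPolynomial σ R}
    (hp : laplacian σ R p = 0) (hq : laplacian σ R q = 0) (hqk : q.IsHomogeneous k) :
    (laplacian σ R ^ (k + 1)) (p * q) = 0 := by
  induction k generalizing p q with
  | zero =>
    simp [laplacian_mul, hp, hq, hqk.pderiv_eq_zero]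
  | succ k ih =>
    have h (i : σ) : (laplacian σ R ^ (k + 1)) (pderiv i p * pderiv i q) = 0 :=
      ih (by rw [laplacian_pderiv, hp, map_zero]) (by rw [laplacian_pderiv, hq, map_zero])
        hqk.pderiv
    rw [pow_succ, Module.End.mul_apply, laplacian_mul, hp, hq, two_mul]
    simp [map_sum, h]

variable (σ R) in
def sumSqX : MvPolynomial σ R := ∑ i : σ, X i ^ 2

theorem isHomogeneous_sumSqX : (sumSqX σ R).IsHomogeneous 2 :=
  IsHomogeneous.sum _ _ _ fun i _ => by simpa using (isHomogeneous_X R i).pow 2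

theorem pderiv_sumSqX (i : σ) : pderiv i (sumSqX σ R) = 2 * X i := by
  classical
  simp [sumSqX, pderiv_X, Pi.single_apply]

theorem laplacian_sumSqX : laplacian σ R (sumSqX σ R) = 2 * Fintype.card σ := by
  have h (i : σ) : pderiv i (2 : MvPolynomial σ R) = 0 := by
    exact_mod_cast (pderiv i).map_natCast 2
  simp [laplacian_apply, pderiv_sumSqX, h, mul_comm]

theorem laplacian_sumSqX_mul {e : ℕ} {p : MvPolynomial σ R} (hp : p.IsHomogeneous e) :
    laplacian σ R (sumSqX σ R * p)
      = (2 * Fintype.card σ + 4 * e) • p + sumSqX σ R * laplacian σ R p := by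
  simp only [laplacian_mul, laplacian_sumSqX, pderiv_sumSqX, mul_assoc, ← mul_sum,
    hp.sum_X_mul_pderiv, nsmul_eq_mul]
  push_cast
  ring

theorem laplacian_sumSqX_pow_succ_mul {e : ℕ} {h : MvPolynomial σ R}
    (hh : laplacian σ R h = 0) (he : h.IsHomogeneous e) (j : ℕ) :
    laplacian σ R (sumSqX σ R ^ (j + 1) * h)
      = (2 * (j + 1) * (2 * e + Fintype.card σ + 2 * j)) • (sumSqX σ R ^ j * h) := by
  induction j with
  | zero =>
    simp only [zero_add, pow_one, pow_zero, one_mul, laplacian_sumSqX_mul he, hh, mul_zero,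
      add_zero]
    ring_nf
  | succ j ih =>
    rw [pow_succ', mul_assoc, laplacian_sumSqX_mul ((isHomogeneous_sumSqX.pow _).mul he), ih]
    simp only [nsmul_eq_mul]
    push_cast
    ring

variable (d t : ℕ) in
/-- The truncated degree `d - 2 * j` is harmless because `H j` must vanish once `2 * j > d`. -/
def IsHarmonicExpansion (F : MvPolynomial σ R) (H : ℕ → MvPolynomial σ R) : Prop :=
  (∀ j, laplacian σ R (H j) = 0 ∧ (H j).IsHomogeneous (d - 2 * j) ∧ (d < 2 * j → H j = 0)) ∧
    F = ∑ j ∈ range t, sumSqX σ R ^ j * H j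

theorem isHarmonicExpansion_single {d : ℕ} {F : MvPolynomial σ R} (hF : F.IsHomogeneous d)
    (hΔ : laplacian σ R F = 0) (t : ℕ) : IsHarmonicExpansion d (t + 1) F (Pi.single 0 F) := by
  refine ⟨fun j => ?_, ?_⟩
  · rcases eq_or_ne j 0 with rfl | hj
    · simpa using ⟨hΔ, hF⟩
    · simp [hj, isHomogeneous_zero]
  · rw [sum_eq_single_of_mem 0 (by simp) fun j _ hj => by simp [hj]]
    simp

end CommSemiring

section Field

variable [Field R] [CharZero R] [Fintype σ] [Nonempty σ]

theorem exists_laplacian_sumSqX_pow_succ_mul_smul_eq {e : ℕ} {h : MvPolynomial σ R}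
    (hh : laplacian σ R h = 0) (he : h.IsHomogeneous e) (j : ℕ) :
    ∃ c : R, laplacian σ R (sumSqX σ R ^ (j + 1) * c • h) = sumSqX σ R ^ j * h := by
  set N := 2 * (j + 1) * (2 * e + Fintype.card σ + 2 * j)
  have hN : (N : R) ≠ 0 := Nat.cast_ne_zero.mpr (by positivity)
  refine ⟨(N : R)⁻¹, ?_⟩
  rw [mul_smul_comm, map_smul, laplacian_sumSqX_pow_succ_mul hh he, ← Nat.cast_smul_eq_nsmul R,
    smul_smul, inv_mul_cancel₀ hN, one_smul]

theorem IsHarmonicExpansion.succ {d t : ℕ} {F : MvPolynomial σ R} {G : ℕ → MvPolynomial σ R}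
    (hF : F.IsHomogeneous (d + 2)) (hG : IsHarmonicExpansion d t (laplacian σ R F) G) :
    ∃ H, IsHarmonicExpansion (d + 2) (t + 1) F H := by
  obtain ⟨hGj, hFG⟩ := hG
  choose c hc using fun j => exists_laplacian_sumSqX_pow_succ_mul_smul_eq (hGj j).1 (hGj j).2.1 j
  set K := fun j => sumSqX σ R ^ (j + 1) * c j • G j
  have hK (j : ℕ) : (K j).IsHomogeneous (d + 2) := by
    rcases lt_or_ge d (2 * j) with hj | hj
    · simp [K, (hGj j).2.2 hj, isHomogeneous_zero]
    · convert (isHomogeneous_sumSqX.pow _).mul ((hGj j).2.1.smul (c j)) using 1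
      omega
  refine ⟨fun | 0 => F - ∑ i ∈ range t, K i | j + 1 => c j • G j, fun j => ?_, ?_⟩
  · cases j with
    | zero =>
      refine ⟨?_, hF.sub (IsHomogeneous.sum _ _ _ fun i _ => hK i), by omega⟩
      simp only [map_sub, map_sum, K, hc, ← hFG, sub_self]
    | succ j =>
      refine ⟨by simp [(hGj j).1], ?_, fun hj => by simp [(hGj j).2.2 (by omega)]⟩
      simpa [show d + 2 - 2 * (j + 1) = d - 2 * j by omega] using (hGj j).2.1.smul (c j)
  · rw [sum_range_succ']
    simp [K]

theorem exists_isHarmonicExpansion (t : ℕ) {d : ℕ} {F : MvPolynomial σ R}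
    (hF : F.IsHomogeneous d) (hΔ : (laplacian σ R ^ t) F = 0) :
    ∃ H, IsHarmonicExpansion d t F H := by
  induction t generalizing d F with
  | zero => exact ⟨0, fun j => by simp [isHomogeneous_zero], by simpa using hΔ⟩
  | succ t ih =>
    rcases lt_or_ge d 2 with hd | hd
    · exact ⟨_, isHarmonicExpansion_single hF
        (laplacian_eq_zero_of_isHomogeneous_of_lt_two hF hd) t⟩
    obtain ⟨d, rfl⟩ := Nat.exists_eq_add_of_le' hd
    rw [pow_succ, Module.End.mul_apply] at hΔ
    obtain ⟨G, hG⟩ := ih (by simpa using hF.laplacian) hΔ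
    exact hG.succ hF

end Field

end MvPolynomial

open MvPolynomial

theorem harm_iff_laplacian_eq_zero {n : ℕ} (P : MvPolynomial (Fin n) ℝ) :
    Harm P ↔ laplacian (Fin n) ℝ P = 0 := by
  rw [laplacian_apply, Harm]

theorem evalP_sumSqX {n : ℕ} (v : E n) : evalP (sumSqX (Fin n) ℝ) v = ‖v‖ ^ 2 := by
  simp [evalP, sumSqX, EuclideanSpace.real_norm_sq_eq]

theorem xray_stmt10_general {n m k : ℕ}
    (P Q : MvPolynomial (Fin n) ℝ) (hP : Harm P) (hPm : P.IsHomogeneous m)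
    (hQ : Harm Q) (hQk : Q.IsHomogeneous k) :
    ∃ R : ℕ → MvPolynomial (Fin n) ℝ,
      (∀ ℓ, Harm (R ℓ) ∧ (R ℓ = 0 ∨ (R ℓ).IsHomogeneous (m + k - 2 * ℓ))) ∧
      ∀ v ∈ sphereS n,
        evalP (P * Q) v = ∑ ℓ ∈ Finset.range (k + 1), evalP (R ℓ) v := by
  rcases n.eq_zero_or_pos with rfl | hn
  · refine ⟨0, fun ℓ => ⟨(harm_iff_laplacian_eq_zero _).mpr (map_zero _), Or.inl rfl⟩,
      fun v hv => ?_⟩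
    have hv1 : ‖v‖ = 1 := mem_sphere_zero_iff_norm.mp hv
    simp [Subsingleton.elim v 0] at hv1
  have : Nonempty (Fin n) := ⟨⟨0, hn⟩⟩
  rw [harm_iff_laplacian_eq_zero] at hP hQ
  obtain ⟨H, hH, hPQ⟩ := exists_isHarmonicExpansion (k + 1) (hPm.mul hQk)
    (laplacian_pow_succ_mul_eq_zero hP hQ hQk)
  refine ⟨H, fun ℓ => ⟨(harm_iff_laplacian_eq_zero _).mpr (hH ℓ).1, Or.inr (hH ℓ).2.1⟩,
    fun v hv => ?_⟩
  have hr : evalP (sumSqX (Fin n) ℝ) v = 1 := by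
    rw [evalP_sumSqX, mem_sphere_zero_iff_norm.mp hv, one_pow]
  simp only [evalP] at hr ⊢
  simp [hPQ, hr]

/-- Product of spherical harmonics: if `f ∈ Ω_m` and `f' ∈ Ω_k` with `m ≥ k`
(viewed as harmonic homogeneous polynomials `P, Q`), then on the unit sphere the product
`f · f'` is a sum of spherical harmonics of degrees `m + k - 2ℓ` for `0 ≤ ℓ ≤ k`. -/
theorem xray_stmt10 {n m k : ℕ} (hmk : k ≤ m)
    (P Q : MvPolynomial (Fin n) ℝ) (hP : Harm P) (hPm : P.IsHomogeneous m)
    (hQ : Harm Q) (hQk : Q.IsHomogeneous k) :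
    ∃ R : ℕ → MvPolynomial (Fin n) ℝ,
      (∀ ℓ, Harm (R ℓ) ∧ (R ℓ = 0 ∨ (R ℓ).IsHomogeneous (m + k - 2 * ℓ))) ∧
      ∀ v ∈ sphereS n,
        evalP (P * Q) v = ∑ ℓ ∈ Finset.range (k + 1), evalP (R ℓ) v :=
  xray_stmt10_general P Q hP hPm hQ hQk
end
end

section
/- Let E be a Euclidean space of dimension n, ξ ∈ E* nonzero, m ≥ 0, and let f be a smooth function on S^{n-2}_ξ with a nonzero spherical harmonic component of degree ≥ m+1. Then the extension E^m_ξ f (defined by E^m_ξ f(cos φ · n(ξ) + sin φ · u) = sin^m(φ) f(u)) has a nonzero spherical harmonic component of degree ≥ m+1 on S^{n-1}. Equivalently: if E^m_ξ f is a sum of spherical harmonics of degree ≤ m on S^{n-1}, then f is a sum of spherical harmonics of degree ≤ m on S^{n-2}_ξ. -/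
open scoped RealInnerProductSpace

noncomputable section

def HasCompGE {n : ℕ} : ℕ → Set (E n) → (E n → ℝ) → Prop
  | 0, S, f => ¬ ∀ v ∈ S, f v = 0
  | (m + 1), S, f => ¬ IsDegLE m S f

def nvec {n : ℕ} (w : E n) : E n := ‖w‖⁻¹ • w

/-- The degree-`m` extension operator `E^m_ξ f (cos φ · n(ξ) + sin φ · u) = sin^m(φ) f(u)`. -/
def extOp {n : ℕ} (m : ℕ) (w : E n) (f : E n → ℝ) (v : E n) : ℝ :=
  ‖v - ⟪nvec w, v⟫ • nvec w‖ ^ m *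
    f (‖v - ⟪nvec w, v⟫ • nvec w‖⁻¹ • (v - ⟪nvec w, v⟫ • nvec w))

/-!
On the equator `S^{n-2}_ξ` (where `sin φ = 1`) the extension `E^m_ξ f` coincides with `f`, so a
polynomial of degree `≤ m` representing `E^m_ξ f` on `S^{n-1}` restricts to one representing `f`.
-/

lemma IsDegLE.of_eqOn_subset {n m : ℕ} {S T : Set (E n)} {f g : E n → ℝ}
    (hg : IsDegLE m T g) (hST : S ⊆ T) (hfg : Set.EqOn f g S) : IsDegLE m S f := by
  obtain ⟨P, hPdeg, hPg⟩ := hg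
  exact ⟨P, hPdeg, fun v hv => (hfg hv).trans (hPg v (hST hv))⟩

lemma subSphere_subset_sphereS {n : ℕ} (w : E n) : subSphere w ⊆ sphereS n :=
  Set.inter_subset_left

lemma extOp_of_inner_eq_zero {n : ℕ} (m : ℕ) {w v : E n} (f : E n → ℝ) (hwv : ⟪w, v⟫ = 0) :
    extOp m w f v = ‖v‖ ^ m * f (‖v‖⁻¹ • v) := by
  have hnv : ⟪nvec w, v⟫ = 0 := by rw [nvec, real_inner_smul_left, hwv, mul_zero]
  simp only [extOp, hnv, zero_smul, sub_zero]

lemma extOp_eqOn_subSphere {n : ℕ} (m : ℕ) (w : E n) (f : E n → ℝ) :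
    Set.EqOn (extOp m w f) f (subSphere w) := by
  rintro v ⟨hv, hwv⟩
  rw [mem_sphere_zero_iff_norm] at hv
  rw [extOp_of_inner_eq_zero m f hwv, hv, one_pow, one_mul, inv_one, one_smul]

theorem xray_stmt14_general {n m : ℕ} (w : E n)
    (f : E n → ℝ)
    (h : HasCompGE (m + 1) (subSphere w) f) :
    HasCompGE (m + 1) (sphereS n) (extOp m w f) := fun hext =>
  h (hext.of_eqOn_subset (subSphere_subset_sphereS w) (extOp_eqOn_subSphere m w f).symm)

/-- If a smooth function `f` on `S^{n-2}_ξ` has a nonzero spherical harmonic component of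
degree `≥ m + 1`, then so does its extension `E^m_ξ f` on `S^{n-1}`. -/
theorem xray_stmt14 {n m : ℕ} (hn : 2 ≤ n) (w : E n) (hw : w ≠ 0)
    (f : E n → ℝ) (hf : ContDiff ℝ (⊤ : ℕ∞) f)
    (h : HasCompGE (m + 1) (subSphere w) f) :
    HasCompGE (m + 1) (sphereS n) (extOp m w f) :=
  xray_stmt14_general w f h
end
end

section
/- Let E be a Euclidean space of dimension n ≥ 3, m ≥ 1, and suppose W is a smooth function on S^{n-1} such that for every nonzero ξ ∈ E*, the function ⟨ξ, ∇W⟩ restricted to S^{n-2}_ξ is a sum of spherical harmonics of degree ≤ m-2 on S^{n-2}_ξ of the same parity as m. Extend W to E \ {0} as an (m-1)-homogeneous function. Then for every nonzero ξ, the function dW(ξ^♯) restricted to the hyperplane ker ξ is a homogeneous polynomial of degree m-2; in particular, for v ∈ ker ξ one has ⟨ξ, ∇W(v)⟩ = dW(ξ^♯)(v), where ∇ on the left is the spherical gradient extended by homogeneity. -/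
/-!
Off the origin, the derivative of `x ↦ ‖x‖ ^ k * W (x / ‖x‖)` in a direction `w` orthogonal to
the base point `v` sees neither the radial factor nor the radial part of the projection, since
`d‖·‖ (v) w = ⟪v, w⟫ / ‖v‖ = 0`. Hence on `ker ξ` the derivative `dW(ξ^♯)` of the extension is
`‖v‖ ^ (m - 2)` times `⟪ξ, ∇W⟫` at `v / ‖v‖`, which by hypothesis is `P (v / ‖v‖)` for a
homogeneous `P` of degree `m - 2`, i.e. `P v`. On the unit sphere the two sides agree outright.
-/

open scoped RealInnerProductSpace

noncomputable section

/-- The `(m-1)`-homogeneous extension of a function on the sphere. -/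
def homExt {n : ℕ} (m : ℕ) (W : E n → ℝ) (x : E n) : ℝ :=
  ‖x‖ ^ (m - 1) * W (‖x‖⁻¹ • x)

theorem MvPolynomial.IsHomogeneous.eval_smul_s19 {σ R : Type*} [CommSemiring R]
    {φ : MvPolynomial σ R} {n : ℕ} (hφ : φ.IsHomogeneous n) (c : R) (x : σ → R) :
    eval (c • x) φ = c ^ n * eval x φ := by
  rw [eval_eq, eval_eq, Finset.mul_sum]
  refine Finset.sum_congr rfl fun d hd => ?_
  have hdeg : ∑ i ∈ d.support, d i = n := by
    rw [← hφ (mem_support_iff.mp hd)]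
    simp [Finsupp.weight_apply, Finsupp.sum]
  simp only [Pi.smul_apply, smul_eq_mul, mul_pow, Finset.prod_mul_distrib,
    Finset.prod_pow_eq_pow_sum, hdeg]
  ring

theorem evalP_smul {n d : ℕ} {P : MvPolynomial (Fin n) ℝ} (hP : P.IsHomogeneous d) (c : ℝ)
    (x : E n) : evalP P (c • x) = c ^ d * evalP P x :=
  hP.eval_smul_s19 c fun i => x i

section InnerProductSpace

variable {F : Type*} [NormedAddCommGroup F] [InnerProductSpace ℝ F] {v w : F}

theorem hasFDerivAt_norm (hv : v ≠ 0) : HasFDerivAt (‖·‖) (‖v‖⁻¹ • innerSL ℝ v) v := by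
  have h := (hasStrictFDerivAt_norm_sq v).hasFDerivAt.sqrt (by positivity)
  simp only [Real.sqrt_sq (norm_nonneg _)] at h
  convert h using 1
  ext u
  simp only [smul_apply, coe_innerSL_apply, smul_eq_mul, one_div, mul_inv_rev, nsmul_eq_mul,
    Nat.cast_ofNat]
  field_simp

theorem fderiv_norm_pow_mul_comp_inv_norm_smul_apply_of_inner_eq_zero (k : ℕ) {W : F → ℝ}
    (hW : DifferentiableAt ℝ W (‖v‖⁻¹ • v)) (hv : v ≠ 0) (hvw : ⟪v, w⟫ = 0) :
    fderiv ℝ (fun x => ‖x‖ ^ k * W (‖x‖⁻¹ • x)) v w =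
      ‖v‖ ^ k * ‖v‖⁻¹ * fderiv ℝ W (‖v‖⁻¹ • v) w := by
  have hnorm := hasFDerivAt_norm hv
  have hproj := ((hasDerivAt_inv (norm_ne_zero_iff.mpr hv)).comp_hasFDerivAt v hnorm).smul
    (hasFDerivAt_id v)
  have h : HasFDerivAt (fun x => ‖x‖ ^ k * W (‖x‖⁻¹ • x)) _ v :=
    (hnorm.pow k).mul (hW.hasFDerivAt.comp (f := fun x => ‖x‖⁻¹ • x) v hproj)
  rw [h.fderiv]
  simp only [Function.comp_apply, neg_smul, id_eq, ContinuousLinearMap.comp_add,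
    ContinuousLinearMap.comp_smulₛₗ, map_inv₀, Real.ringHom_apply, ContinuousLinearMap.comp_id,
    smul_add, nsmul_eq_mul, add_apply, smul_apply, smul_eq_mul, ContinuousLinearMap.comp_apply,
    ContinuousLinearMap.smulRight_apply, neg_apply, coe_innerSL_apply, hvw, mul_zero, neg_zero,
    zero_smul, map_zero, add_zero]
  ring

end InnerProductSpace

theorem inv_norm_smul_mem_subSphere {n : ℕ} {v w : E n} (hv : v ≠ 0) (hvw : ⟪w, v⟫ = 0) :
    ‖v‖⁻¹ • v ∈ subSphere w := by
  refine ⟨?_, ?_⟩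
  · simp [norm_smul, norm_ne_zero_iff.mpr hv]
  · simp [real_inner_smul_right, hvw]

theorem fderiv_homExt_apply_of_inner_eq_zero {n : ℕ} (m : ℕ) {W : E n → ℝ}
    (hW : Differentiable ℝ W) {v w : E n} (hv : v ≠ 0) (hvw : ⟪w, v⟫ = 0) :
    fderiv ℝ (homExt m W) v w = ‖v‖ ^ (m - 1) * ‖v‖⁻¹ * ⟪w, gradient W (‖v‖⁻¹ • v)⟫ := by
  rw [inner_gradient_right, conj_trivial]
  exact fderiv_norm_pow_mul_comp_inv_norm_smul_apply_of_inner_eq_zero (m - 1) (hW _) hv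
    (by rwa [real_inner_comm])

theorem xray_stmt19_general {n m : ℕ}
    (W : E n → ℝ) (hW : ContDiff ℝ (⊤ : ℕ∞) W)
    (hyp : ∀ w : E n, w ≠ 0 → ∃ P : MvPolynomial (Fin n) ℝ,
      (if 2 ≤ m then P.IsHomogeneous (m - 2) else P = 0) ∧
      ∀ v ∈ subSphere w, ⟪w, gradient W v⟫ = evalP P v) :
    ∀ w : E n, w ≠ 0 →
      (∃ Q : MvPolynomial (Fin n) ℝ,
        (if 2 ≤ m then Q.IsHomogeneous (m - 2) else Q = 0) ∧
        ∀ v : E n, v ≠ 0 → ⟪w, v⟫ = 0 →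
          fderiv ℝ (homExt m W) v w = evalP Q v) ∧
      (∀ v ∈ subSphere w, ⟪w, gradient W v⟫ = fderiv ℝ (homExt m W) v w) := by
  have hWd : Differentiable ℝ W := hW.differentiable (by simp)
  intro w hw
  obtain ⟨P, hPhom, hPval⟩ := hyp w hw
  refine ⟨⟨P, hPhom, fun v hv hvw => ?_⟩, fun v ⟨hv1, hvw⟩ => ?_⟩
  · rw [fderiv_homExt_apply_of_inner_eq_zero m hWd hv hvw,
      hPval _ (inv_norm_smul_mem_subSphere hv hvw)]
    split_ifs at hPhom with hm
    · have hv0 : ‖v‖ ≠ 0 := norm_ne_zero_iff.mpr hv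
      calc _ = ‖v‖ ^ (m - 2) * evalP P (‖v‖⁻¹ • v) := by
            rw [show m - 1 = m - 2 + 1 by omega, pow_succ, mul_inv_cancel_right₀ hv0]
        _ = evalP P v := by rw [← evalP_smul hPhom, smul_inv_smul₀ hv0]
    · simp [hPhom, evalP]
  · have hv : ‖v‖ = 1 := by simpa using hv1
    rw [fderiv_homExt_apply_of_inner_eq_zero m hWd (by simp [← norm_ne_zero_iff, hv]) hvw, hv]
    simp

/-- Suppose `W` is smooth on `S^{n-1}` (n ≥ 3, m ≥ 1) and, for every nonzero covector
(dual vector `w`), the function `⟨ξ, ∇W⟩` restricted to `S^{n-2}_ξ` is a sum of spherical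
harmonics of degree `≤ m - 2` of the same parity as `m` (equivalently, the restriction of a
homogeneous polynomial of degree `m - 2`; for `m = 1` this means the function vanishes).
Extend `W` to `E \ {0}` as an `(m-1)`-homogeneous function.  Then for every nonzero `w`:
the directional derivative `dW(ξ^♯)` restricted to `ker ξ` is a homogeneous polynomial of
degree `m - 2`, and for `v ∈ S^{n-2}_ξ` one has `⟨ξ, ∇W(v)⟩ = dW(ξ^♯)(v)`, the left-hand
side being the pairing of `ξ` with the spherical gradient. -/
theorem xray_stmt19 {n m : ℕ} (hn : 3 ≤ n) (hm : 1 ≤ m)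
    (W : E n → ℝ) (hW : ContDiff ℝ (⊤ : ℕ∞) W)
    (hyp : ∀ w : E n, w ≠ 0 → ∃ P : MvPolynomial (Fin n) ℝ,
      (if 2 ≤ m then P.IsHomogeneous (m - 2) else P = 0) ∧
      ∀ v ∈ subSphere w, ⟪w, gradient W v⟫ = evalP P v) :
    ∀ w : E n, w ≠ 0 →
      (∃ Q : MvPolynomial (Fin n) ℝ,
        (if 2 ≤ m then Q.IsHomogeneous (m - 2) else Q = 0) ∧
        ∀ v : E n, v ≠ 0 → ⟪w, v⟫ = 0 →
          fderiv ℝ (homExt m W) v w = evalP Q v) ∧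
      (∀ v ∈ subSphere w, ⟪w, gradient W v⟫ = fderiv ℝ (homExt m W) v w) :=
  xray_stmt19_general W hW hyp
end
end
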